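/- arXiv:1906.01469 — 4 statements merged into one kernel-verified Lean document; each statement's English description precedes it below -/
import Mathlib

section
/- Let Q ⊂ ℝ^d_{≥0} be an anti-blocking polytope and let A(Q) := {y ∈ ℝ^d_{≥0} : ⟨y, x⟩ ≤ 1 for all x ∈ Q} be its anti-blocking dual. Then the polar dual of the unconditional polytope UQ equals the unconditional polytope of A(Q): (UQ)* = U(A(Q)). -/
open Finset

/-- Dot product on `ℝ^d`. -/
def dot {d : ℕ} (x y : Fin d → ℝ) : ℝ := ∑ i, x i * y i

/-- Coordinatewise absolute value. -/
def absVec {d : ℕ} (p : Fin d → ℝ) : Fin d → ℝ := fun i => |p i|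

/-- A vector of signs `±1`. -/
def IsSignVec {d : ℕ} (σ : Fin d → ℝ) : Prop := ∀ i, σ i = 1 ∨ σ i = -1

/-- Coordinatewise sign flip. -/
def sflip {d : ℕ} (σ p : Fin d → ℝ) : Fin d → ℝ := fun i => σ i * p i

/-- A set is unconditional if it is closed under coordinate sign flips. -/
def Unconditional {d : ℕ} (K : Set (Fin d → ℝ)) : Prop :=
  ∀ σ : Fin d → ℝ, IsSignVec σ → ∀ p ∈ K, sflip σ p ∈ K

/-- A (nonempty) polytope: the convex hull of a nonempty finite set. -/
def IsPolytope {d : ℕ} (P : Set (Fin d → ℝ)) : Prop :=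
  ∃ V : Finset (Fin d → ℝ), V.Nonempty ∧ P = convexHull ℝ (V : Set (Fin d → ℝ))

/-- The nonnegative orthant of `ℝ^d`. -/
def nonnegOrthant (d : ℕ) : Set (Fin d → ℝ) := {x | ∀ i, 0 ≤ x i}

/-- An anti-blocking polytope: a polytope in the nonnegative orthant that is
down-closed with respect to the componentwise order. -/
def IsAntiBlocking {d : ℕ} (P : Set (Fin d → ℝ)) : Prop :=
  IsPolytope P ∧ P ⊆ nonnegOrthant d ∧
    ∀ q ∈ P, ∀ p : Fin d → ℝ, (∀ i, 0 ≤ p i ∧ p i ≤ q i) → p ∈ P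

/-- The unconditional set associated to a set `P`: all points whose vector of
absolute values lies in `P`. -/
def UPoly {d : ℕ} (P : Set (Fin d → ℝ)) : Set (Fin d → ℝ) := {p | absVec p ∈ P}

/-- Cast an integer vector to a real vector. -/
def intCast {d : ℕ} (a : Fin d → ℤ) : Fin d → ℝ := fun i => (a i : ℝ)

/-- A lattice polytope: convex hull of a nonempty finite set of integer points. -/
def IsLatticePolytope {d : ℕ} (P : Set (Fin d → ℝ)) : Prop :=
  ∃ V : Finset (Fin d → ℤ), V.Nonempty ∧ P = convexHull ℝ (intCast '' (V : Set (Fin d → ℤ)))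

/-- Reflexive polytope: `0` is interior and `P` is cut out by integral
inequalities with right-hand side `1`. -/
def IsReflexive {d : ℕ} (P : Set (Fin d → ℝ)) : Prop :=
  0 ∈ interior P ∧
    ∃ A : Finset (Fin d → ℤ), P = {x | ∀ a ∈ A, dot (intCast a) x ≤ 1}

/-- The anti-blocking dual. -/
def ABdual {d : ℕ} (Q : Set (Fin d → ℝ)) : Set (Fin d → ℝ) :=
  {y | y ∈ nonnegOrthant d ∧ ∀ x ∈ Q, dot y x ≤ 1}

/-- The polar dual. -/
def polarDual {d : ℕ} (K : Set (Fin d → ℝ)) : Set (Fin d → ℝ) :=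
  {y | ∀ x ∈ K, dot y x ≤ 1}

/-! A point `p` and the vector `|p|` lie in `UQ` together, and `⟨y, p⟩ ≤ ⟨|y|, |p|⟩` with equality
when the signs of `p` are chosen to match those of `y`. So the constraints of `(UQ)*` at `y` are
exactly the constraints of `A(Q)` at `|y|`. -/

section

variable {d : ℕ}

theorem dot_le_dot_absVec (y p : Fin d → ℝ) : dot y p ≤ dot (absVec y) (absVec p) :=
  Finset.sum_le_sum fun i _ => by
    simpa only [absVec, abs_mul] using le_abs_self (y i * p i)

noncomputable def alignSigns (y x : Fin d → ℝ) : Fin d → ℝ := fun i => if 0 ≤ y i then x i else -x i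

theorem absVec_alignSigns (y : Fin d → ℝ) {x : Fin d → ℝ} (hx : x ∈ nonnegOrthant d) :
    absVec (alignSigns y x) = x := by
  funext i
  simp only [absVec, alignSigns]
  split_ifs <;> simp [abs_of_nonneg (hx i)]

theorem dot_alignSigns (y x : Fin d → ℝ) : dot y (alignSigns y x) = dot (absVec y) x :=
  Finset.sum_congr rfl fun i _ => by
    simp only [absVec, alignSigns]
    split_ifs with h
    · rw [abs_of_nonneg h]
    · rw [abs_of_neg (not_le.mp h)]; ring

theorem UPoly_ABdual_subset_polarDual (Q : Set (Fin d → ℝ)) :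
    UPoly (ABdual Q) ⊆ polarDual (UPoly Q) :=
  fun y hy p hp => (dot_le_dot_absVec y p).trans (hy.2 _ hp)

theorem polarDual_UPoly_subset_UPoly_ABdual {Q : Set (Fin d → ℝ)} (hQ : Q ⊆ nonnegOrthant d) :
    polarDual (UPoly Q) ⊆ UPoly (ABdual Q) := by
  refine fun y hy => ⟨fun i => abs_nonneg (y i), fun x hx => ?_⟩
  have hxU : alignSigns y x ∈ UPoly Q := by
    show absVec (alignSigns y x) ∈ Q
    rwa [absVec_alignSigns y (hQ hx)]
  simpa only [dot_alignSigns] using hy _ hxU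

theorem polarDual_UPoly {Q : Set (Fin d → ℝ)} (hQ : Q ⊆ nonnegOrthant d) :
    polarDual (UPoly Q) = UPoly (ABdual Q) :=
  (polarDual_UPoly_subset_UPoly_ABdual hQ).antisymm (UPoly_ABdual_subset_polarDual Q)

end

/-- the polar dual of the unconditional polytope of an
anti-blocking polytope `Q` is the unconditional polytope of the anti-blocking
dual `A(Q)`. -/
theorem stmt4 {d : ℕ} (Q : Set (Fin d → ℝ)) (hQ : IsAntiBlocking Q) :
    polarDual (UPoly Q) = UPoly (ABdual Q) :=
  polarDual_UPoly hQ.2.1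
end

section
/- For a full-dimensional anti-blocking polytope P ⊂ ℝ^d_{≥0}, the anti-blocking dual satisfies A(A(P)) = P. -/
open Finset

/-! A point `y` of the orthant outside `P` is strictly separated from the closed convex set `P` by
a linear functional `c`. Since `P` is down-closed in the orthant, replacing `c` by its positive
part `c⁺` keeps the separation, and as `0 ∈ P` the threshold is positive; rescaled, `c⁺` is a
point of `A(P)` whose pairing with `y` exceeds `1`, so `y ∉ A(A(P))`. -/

lemma dot_eq_dotProduct {d : ℕ} (x y : Fin d → ℝ) : dot x y = x ⬝ᵥ y := rfl

lemma exists_dot_eq {d : ℕ} (f : (Fin d → ℝ) →L[ℝ] ℝ) : ∃ c, ∀ x, f x = dot c x :=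
  ⟨fun i => f fun j => if i = j then 1 else 0, fun x => by
    rw [← f.coe_coe, LinearMap.pi_apply_eq_sum_univ]
    simp only [dot, smul_eq_mul, mul_comm, ContinuousLinearMap.coe_coe]⟩

lemma IsPolytope.isClosed {d : ℕ} {P : Set (Fin d → ℝ)} (hP : IsPolytope P) : IsClosed P := by
  obtain ⟨V, -, rfl⟩ := hP
  exact (V.finite_toSet.isCompact_convexHull ℝ).isClosed

lemma IsPolytope.convex {d : ℕ} {P : Set (Fin d → ℝ)} (hP : IsPolytope P) : Convex ℝ P := by
  obtain ⟨V, -, rfl⟩ := hP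
  exact convex_convexHull ℝ _

lemma IsPolytope.nonempty {d : ℕ} {P : Set (Fin d → ℝ)} (hP : IsPolytope P) : P.Nonempty := by
  obtain ⟨V, hV, rfl⟩ := hP
  obtain ⟨q, hq⟩ := hV
  exact ⟨q, subset_convexHull ℝ _ hq⟩

lemma IsAntiBlocking.zero_mem {d : ℕ} {P : Set (Fin d → ℝ)} (hP : IsAntiBlocking P) :
    (0 : Fin d → ℝ) ∈ P := by
  obtain ⟨q, hq⟩ := hP.1.nonempty
  exact hP.2.2 q hq 0 fun i => ⟨le_rfl, hP.2.1 hq i⟩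

section AntiBlockingDual

variable {d : ℕ} {P : Set (Fin d → ℝ)}

lemma subset_ABdual_ABdual (horth : P ⊆ nonnegOrthant d) : P ⊆ ABdual (ABdual P) :=
  fun x hx => ⟨horth hx, fun y hy => by
    rw [dot_eq_dotProduct, dotProduct_comm]
    exact hy.2 x hx⟩

variable (horth : P ⊆ nonnegOrthant d)
  (hdown : ∀ q ∈ P, ∀ p : Fin d → ℝ, (∀ i, 0 ≤ p i ∧ p i ≤ q i) → p ∈ P)
include horth hdown

lemma dot_posPart_lt_of_dot_lt {c : Fin d → ℝ} {u : ℝ} (hc : ∀ x ∈ P, dot c x < u) :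
    ∀ x ∈ P, dot c⁺ x < u := by
  intro x hx
  set x' : Fin d → ℝ := fun i => if 0 ≤ c i then x i else 0
  have hx' : x' ∈ P := hdown x hx x' fun i => by
    by_cases h : 0 ≤ c i <;> simp [x', h, horth hx i]
  have hdot : dot c⁺ x = dot c x' := Finset.sum_congr rfl fun i _ => by
    by_cases h : 0 ≤ c i
    · simp [x', h]
    · simp [x', h, posPart_eq_zero.mpr (le_of_not_ge h)]
  exact hdot ▸ hc x' hx'

lemma exists_nonneg_dot_separating (hconv : Convex ℝ P) (hclosed : IsClosed P)
    {y : Fin d → ℝ} (hy : y ∈ nonnegOrthant d) (hyP : y ∉ P) :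
    ∃ c ∈ nonnegOrthant d, ∃ u : ℝ, (∀ x ∈ P, dot c x < u) ∧ u < dot c y := by
  obtain ⟨f, u, hfP, hfy⟩ := geometric_hahn_banach_closed_point hconv hclosed hyP
  obtain ⟨c, hfc⟩ := exists_dot_eq f
  refine ⟨c⁺, fun i => by simp [Pi.posPart_apply], u,
    dot_posPart_lt_of_dot_lt horth hdown fun x hx => hfc x ▸ hfP x hx, ?_⟩
  calc u < dot c y := hfc y ▸ hfy
    _ ≤ dot c⁺ y := dotProduct_le_dotProduct_of_nonneg_right (le_posPart c) hy

lemma ABdual_ABdual_eq (hconv : Convex ℝ P) (hclosed : IsClosed P) (h0 : (0 : Fin d → ℝ) ∈ P) :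
    ABdual (ABdual P) = P := by
  refine subset_antisymm (fun y hy => ?_) (subset_ABdual_ABdual horth)
  by_contra hyP
  obtain ⟨c, hc, u, hcP, hcy⟩ := exists_nonneg_dot_separating horth hdown hconv hclosed hy.1 hyP
  have hu : 0 < u := by simpa [dot_eq_dotProduct] using hcP 0 h0
  have hz : u⁻¹ • c ∈ ABdual P := by
    refine ⟨fun i => mul_nonneg (inv_nonneg.mpr hu.le) (hc i), fun x hx => ?_⟩
    rw [dot_eq_dotProduct, smul_dotProduct, smul_eq_mul, inv_mul_le_iff₀ hu, mul_one]
    exact (hcP x hx).le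
  have hyz := hy.2 _ hz
  rw [dot_eq_dotProduct, dotProduct_comm, smul_dotProduct, smul_eq_mul, inv_mul_le_iff₀ hu,
    mul_one] at hyz
  exact (hcy.trans_le hyz).false

end AntiBlockingDual

theorem stmt5_general {d : ℕ} (P : Set (Fin d → ℝ)) (hP : IsAntiBlocking P) :
    ABdual (ABdual P) = P :=
  ABdual_ABdual_eq hP.2.1 hP.2.2 hP.1.convex hP.1.isClosed hP.zero_mem

/-- for a full-dimensional anti-blocking polytope `P`,
`A(A(P)) = P`. -/
theorem stmt5 {d : ℕ} (P : Set (Fin d → ℝ)) (hP : IsAntiBlocking P)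
    (hfull : (interior P).Nonempty) :
    ABdual (ABdual P) = P :=
  stmt5_general P hP
end

section
/- Let P ⊂ ℝ^d be a locally anti-blocking lattice polytope with 0 in its interior. Then P is reflexive if and only if P ∩ σℝ^d_{≥0} is compressed (equivalently, has facet width one) for every σ ∈ {−1,+1}^d. -/
open Finset

/-- A facet-defining valid inequality: the inequality is valid on `Q` and the
touching set spans an affine subspace of dimension `d - 1`. -/
def IsFacetIneq {d : ℕ} (Q : Set (Fin d → ℝ)) (a : Fin d → ℤ) (b : ℝ) : Prop :=
  (∀ x ∈ Q, dot (intCast a) x ≤ b) ∧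
    Module.finrank ℝ (vectorSpan ℝ {x | x ∈ Q ∧ dot (intCast a) x = b}) = d - 1

/-- Facet width one: for every facet-defining primitive integral inequality, the
values of the corresponding linear functional on `Q` span an interval of
length `1`.  This characterizes compressed lattice polytopes. -/
def HasFacetWidthOne {d : ℕ} (Q : Set (Fin d → ℝ)) : Prop :=
  ∀ (a : Fin d → ℤ) (b : ℝ), Finset.univ.gcd a = 1 → IsFacetIneq Q a b →
    sSup ((fun x => dot (intCast a) x) '' Q) -
      sInf ((fun x => dot (intCast a) x) '' Q) = 1

/-!
Write `Q_σ = P ∩ σℝ^d_{≥0}`. Local anti-blocking means that setting coordinates of a point of `P`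
to `0` stays in `P`. Hence a facet of `Q_σ` whose primitive normal `a` has a coordinate of sign
opposite to `σ` is a coordinate facet `x_j = 0`, with `⟨a, x⟩ = -σ_j x_j`; the other facets have
`⟨a, ·⟩ ≥ 0` on `Q_σ`, with minimum `0` at the origin.

If `P = {x | ⟨a', x⟩ ≤ 1, a' ∈ A}` is reflexive, the maximum of `σ_j x_j` over `P` is a positive
integer attained at a truncated vertex `m σ_j e_j`, and the inequality of `A` cutting off
`(m + 1) σ_j e_j` forces `m = 1`. So coordinate facets have width one. For a facet with normal in
the orthant that is not a coordinate facet, a relative interior point lies strictly inside the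
orthant, hence on the boundary of `P`, so some `⟨a', x⟩ ≤ 1` is tight on the whole facet; then
`a'` is a positive integer multiple of `a`, and `⟨a, ·⟩ ≤ 1` on `Q_σ` with equality at some
`σ_j e_j`.

Conversely, Fourier–Motzkin elimination gives an integral inequality description of the lattice
polytope `P`, hence of each `Q_σ`, whose irredundant inequalities are facets. Width one turns each
non-coordinate facet into `⟨a, x⟩ ≤ 1` with `a` in the orthant, and these inequalities for all `σ`
describe `P`, as truncating a point of `P` to an orthant stays in `P` and only increases `⟨a, x⟩`.
-/

open scoped Topology

section Dot

variable {d : ℕ}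

lemma dotProductEquiv_apply_eq_dot (a x : Fin d → ℝ) : dotProductEquiv ℝ (Fin d) a x = dot a x :=
  rfl

@[simp] lemma intCastVec_apply (a : Fin d → ℤ) (i : Fin d) : intCast a i = a i := rfl

lemma dot_add_right (a x y : Fin d → ℝ) : dot a (x + y) = dot a x + dot a y :=
  dotProduct_add a x y

lemma dot_sub_right (a x y : Fin d → ℝ) : dot a (x - y) = dot a x - dot a y :=
  dotProduct_sub a x y

lemma dot_smul_right (a x : Fin d → ℝ) (c : ℝ) : dot a (c • x) = c * dot a x :=
  dotProduct_smul c a x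

lemma dot_smul_left (a x : Fin d → ℝ) (c : ℝ) : dot (c • a) x = c * dot a x :=
  smul_dotProduct c a x

lemma dot_single_right (a : Fin d → ℝ) (j : Fin d) (c : ℝ) : dot a (Pi.single j c) = a j * c :=
  dotProduct_single a c j

lemma dot_single_left (x : Fin d → ℝ) (j : Fin d) (c : ℝ) : dot (Pi.single j c) x = c * x j :=
  single_dotProduct x c j

lemma dot_self_pos {a : Fin d → ℝ} (ha : a ≠ 0) : 0 < dot a a :=
  (sum_nonneg fun i _ => mul_self_nonneg (a i)).lt_of_ne
    (Ne.symm (mt dotProduct_self_eq_zero.mp ha))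

lemma continuous_dot (a : Fin d → ℝ) : Continuous (dot a) :=
  continuous_finsetSum _ fun i _ => continuous_const.mul (continuous_apply i)

lemma dot_le_of_mem_convexHull {W : Set (Fin d → ℝ)} {a : Fin d → ℝ} {b : ℝ}
    (h : ∀ w ∈ W, dot a w ≤ b) {x : Fin d → ℝ} (hx : x ∈ convexHull ℝ W) : dot a x ≤ b :=
  convexHull_min h (convex_halfSpace_le ⟨dot_add_right a, fun c x => dot_smul_right a x c⟩ b) hx

lemma intCast_ne_zero_of_gcd_eq_one {a : Fin d → ℤ} (h : univ.gcd a = 1) : intCast a ≠ 0 := by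
  intro ha
  have : univ.gcd a = 0 := Finset.gcd_eq_zero_iff.mpr fun i _ => by
    simpa using congrFun ha i
  simp_all

end Dot

section Signs

variable {d : ℕ} {σ : Fin d → ℝ}

/-- The orthant `σ ℝ^d_{≥0}`. -/
def signedOrthant (σ : Fin d → ℝ) : Set (Fin d → ℝ) := {x | ∀ i, 0 ≤ σ i * x i}

lemma IsSignVec.mul_self (hσ : IsSignVec σ) (i : Fin d) : σ i * σ i = 1 := by
  rcases hσ i with h | h <;> simp [h]

lemma IsSignVec.ne_zero (hσ : IsSignVec σ) (i : Fin d) : σ i ≠ 0 := by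
  rcases hσ i with h | h <;> simp [h]

lemma IsSignVec.mul_mul_mul (hσ : IsSignVec σ) (i : Fin d) (a x : ℝ) :
    (σ i * a) * (σ i * x) = a * x := by
  linear_combination (a * x) * hσ.mul_self i

lemma IsSignVec.sflip_sflip (hσ : IsSignVec σ) (x : Fin d → ℝ) : sflip σ (sflip σ x) = x := by
  funext i
  simp only [sflip, ← mul_assoc, hσ.mul_self, one_mul]

lemma IsSignVec.dot_eq_sum (hσ : IsSignVec σ) (a x : Fin d → ℝ) :
    dot a x = ∑ i, (σ i * a i) * (σ i * x i) := by
  simp only [dot, hσ.mul_mul_mul]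

lemma IsSignVec.dot_nonneg (hσ : IsSignVec σ) {a x : Fin d → ℝ} (ha : a ∈ signedOrthant σ)
    (hx : x ∈ signedOrthant σ) : 0 ≤ dot a x := by
  rw [hσ.dot_eq_sum]
  exact sum_nonneg fun i _ => mul_nonneg (ha i) (hx i)

lemma IsSignVec.one_le_mul_intCast (hσ : IsSignVec σ) {i : Fin d} {z : ℤ}
    (h : 0 < σ i * z) : 1 ≤ σ i * z := by
  rcases hσ i with hi | hi <;> rw [hi] at h ⊢
  · simp only [one_mul, Int.cast_pos] at h ⊢
    exact_mod_cast h
  · simp only [neg_mul, one_mul, Left.neg_pos_iff, Int.cast_lt_zero] at h ⊢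
    have : z ≤ -1 := by omega
    have : (z : ℝ) ≤ -1 := by exact_mod_cast this
    linarith

lemma IsSignVec.exists_intCast_eq (hσ : IsSignVec σ) : ∃ s : Fin d → ℤ, intCast s = σ :=
  ⟨fun i => if σ i = 1 then 1 else -1, funext fun i => by
    rcases hσ i with h | h <;> norm_num [h, intCast]⟩

noncomputable def signVecOf (x : Fin d → ℝ) : Fin d → ℝ := fun i => if 0 ≤ x i then 1 else -1

lemma isSignVec_signVecOf (x : Fin d → ℝ) : IsSignVec (signVecOf x) := by
  intro i
  by_cases h : 0 ≤ x i <;> simp [signVecOf, h]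

lemma mem_signedOrthant_signVecOf (x : Fin d → ℝ) : x ∈ signedOrthant (signVecOf x) := by
  intro i
  by_cases h : 0 ≤ x i <;> simp [signVecOf, h]
  linarith

lemma exists_mul_neg_of_notMem_signedOrthant {x : Fin d → ℝ} (hx : x ∉ signedOrthant σ) :
    ∃ j, σ j * x j < 0 := by
  simpa [signedOrthant] using hx

lemma zero_mem_signedOrthant (σ : Fin d → ℝ) : (0 : Fin d → ℝ) ∈ signedOrthant σ := by
  simp [signedOrthant]

lemma isClosed_signedOrthant (σ : Fin d → ℝ) : IsClosed (signedOrthant σ) := by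
  simp only [signedOrthant, Set.ofPred_forall]
  exact isClosed_iInter fun i =>
    isClosed_le continuous_const (continuous_const.mul (continuous_apply i))

lemma convex_signedOrthant (σ : Fin d → ℝ) : Convex ℝ (signedOrthant σ) := by
  simp only [signedOrthant, Set.ofPred_forall]
  refine convex_iInter fun i => ?_
  exact convex_halfSpace_ge (f := fun x : Fin d → ℝ => σ i * x i)
    ⟨fun x y => mul_add _ _ _, fun c x => by simp only [Pi.smul_apply, smul_eq_mul]; ring⟩ 0

lemma mem_interior_signedOrthant {x : Fin d → ℝ} (hx : ∀ i, 0 < σ i * x i) :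
    x ∈ interior (signedOrthant σ) := by
  have hopen : IsOpen {y : Fin d → ℝ | ∀ i, 0 < σ i * y i} := by
    simp only [Set.ofPred_forall]
    exact isOpen_iInter_of_finite fun i =>
      isOpen_lt continuous_const (continuous_const.mul (continuous_apply i))
  exact interior_maximal (fun y hy i => (hy i).le) hopen hx

lemma single_mem_signedOrthant (hσ : IsSignVec σ) (j : Fin d) :
    Pi.single j (σ j) ∈ signedOrthant σ := by
  intro i
  rcases eq_or_ne i j with rfl | h
  · simp [hσ.mul_self]
  · simp [h]

end Signs

section LocallyAntiBlocking

variable {d : ℕ}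

def IsLocallyAntiBlocking (P : Set (Fin d → ℝ)) : Prop :=
  ∀ σ : Fin d → ℝ, IsSignVec σ → IsAntiBlocking ((sflip σ '' P) ∩ nonnegOrthant d)

lemma IsLocallyAntiBlocking.mem_of_forall_eq_or_eq_zero {P : Set (Fin d → ℝ)}
    (hP : IsLocallyAntiBlocking P) {x y : Fin d → ℝ} (hx : x ∈ P)
    (hy : ∀ i, y i = x i ∨ y i = 0) : y ∈ P := by
  set τ := signVecOf x
  have hτ : IsSignVec τ := isSignVec_signVecOf x
  have hτx : ∀ i, 0 ≤ τ i * x i := mem_signedOrthant_signVecOf x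
  have hmem : sflip τ y ∈ (sflip τ '' P) ∩ nonnegOrthant d := by
    refine (hP τ hτ).2.2 _ ⟨⟨x, hx, rfl⟩, hτx⟩ _ fun i => ?_
    rcases hy i with h | h <;> simp [sflip, h, hτx i]
  obtain ⟨p, hp, hpy⟩ := hmem.1
  rwa [← hτ.sflip_sflip p, hpy, hτ.sflip_sflip] at hp

end LocallyAntiBlocking

section Facets

variable {d : ℕ}

lemma vectorSpan_le_ker_dot {S : Set (Fin d → ℝ)} {a : Fin d → ℝ} {b : ℝ}
    (h : ∀ x ∈ S, dot a x = b) :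
    vectorSpan ℝ S ≤ LinearMap.ker (dotProductEquiv ℝ (Fin d) a) := by
  rw [vectorSpan_def, Submodule.span_le]
  rintro _ ⟨x, hx, y, hy, rfl⟩
  change dot a (x - y) = 0
  rw [dot_sub_right, h x hx, h y hy, sub_self]

lemma finrank_ker_dot {a : Fin d → ℝ} (ha : a ≠ 0) :
    Module.finrank ℝ (LinearMap.ker (dotProductEquiv ℝ (Fin d) a)) = d - 1 := by
  have := Module.Dual.finrank_ker_add_one_of_ne_zero
    (f := dotProductEquiv ℝ (Fin d) a) (by simpa using ha)
  rw [Module.finrank_fin_fun] at this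
  omega

lemma IsFacetIneq.exists_eq_smul {Q : Set (Fin d → ℝ)} {a : Fin d → ℤ} {b : ℝ}
    (hF : IsFacetIneq Q a b) (ha : intCast a ≠ 0) {a' : Fin d → ℝ} {b' : ℝ}
    (h : ∀ x ∈ Q, dot (intCast a) x = b → dot a' x = b') : ∃ c : ℝ, a' = c • intCast a := by
  set f := dotProductEquiv ℝ (Fin d)
  have hW : vectorSpan ℝ {x | x ∈ Q ∧ dot (intCast a) x = b} = LinearMap.ker (f (intCast a)) :=
    Submodule.eq_of_le_of_finrank_le (vectorSpan_le_ker_dot fun x hx => hx.2)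
      (by rw [finrank_ker_dot ha, hF.2])
  have hker : LinearMap.ker (f (intCast a)) ≤ LinearMap.ker (f a') :=
    hW ▸ vectorSpan_le_ker_dot fun x hx => h x hx.1 hx.2
  have hspan := mem_span_of_iInf_ker_le_ker (L := fun _ : Unit => f (intCast a)) (K := f a')
    (by simpa using hker)
  rw [Set.range_const, Submodule.mem_span_singleton] at hspan
  obtain ⟨c, hc⟩ := hspan
  exact ⟨c, f.injective (by rw [map_smul, hc])⟩

lemma exists_int_eq_of_intCast_eq_smul {a a' : Fin d → ℤ} (hgcd : univ.gcd a = 1) {c : ℝ}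
    (h : intCast a' = c • intCast a) : ∃ k : ℤ, c = k := by
  obtain ⟨g, hg⟩ := Finset.gcd_eq_sum_mul univ a
  refine ⟨∑ i, a' i * g i, ?_⟩
  have hone : ∑ i, (a i : ℝ) * g i = 1 := by exact_mod_cast (hgcd ▸ hg).symm
  have hcoord : ∀ i, (a' i : ℝ) = c * a i := fun i => by simpa using congrFun h i
  push_cast
  simp only [hcoord, mul_assoc, ← mul_sum, hone, mul_one]

lemma IsFacetIneq.eq_single {Q : Set (Fin d → ℝ)} {a : Fin d → ℤ} {b : ℝ}
    (hF : IsFacetIneq Q a b) (hgcd : univ.gcd a = 1) {j : Fin d}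
    (hj : ∀ x ∈ Q, dot (intCast a) x = b → x j = 0) :
    (∀ x, dot (intCast a) x = a j * x j) ∧ (a j = 1 ∨ a j = -1) := by
  obtain ⟨c, hc⟩ := hF.exists_eq_smul (intCast_ne_zero_of_gcd_eq_one hgcd) (a' := Pi.single j 1)
    fun x hx hxb => by rw [dot_single_left, one_mul, hj x hx hxb]
  have hcj : c * a j = 1 := by simpa using (congrFun hc j).symm
  have hzero : ∀ i, i ≠ j → a i = 0 := fun i hi => by
    have := congrFun hc i
    simp only [Pi.single_eq_of_ne hi, Pi.smul_apply, intCastVec_apply, smul_eq_mul] at this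
    exact_mod_cast (mul_eq_zero.mp this.symm).resolve_left (left_ne_zero_of_mul_eq_one hcj)
  have hsingle : intCast a = Pi.single j (a j : ℝ) := funext fun i => by
    rcases eq_or_ne i j with rfl | hi
    · simp
    · simp [hzero i hi, hi]
  refine ⟨fun x => by rw [hsingle, dot_single_left], Int.isUnit_iff.mp (isUnit_of_dvd_one ?_)⟩
  refine hgcd ▸ Finset.dvd_gcd fun i _ => ?_
  rcases eq_or_ne i j with rfl | hi
  · exact dvd_rfl
  · simp [hzero i hi]

lemma IsSignVec.intCast_eq_neg {σ : Fin d → ℝ} (hσ : IsSignVec σ) {j : Fin d} {u : ℤ}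
    (hu : u = 1 ∨ u = -1) (h : σ j * u < 0) : (u : ℝ) = -σ j := by
  rcases hσ j with hs | hs <;> rcases hu with rfl | rfl <;> norm_num [hs] at h <;> norm_num [hs]

lemma IsSignVec.intCast_eq {σ : Fin d → ℝ} (hσ : IsSignVec σ) {j : Fin d} {u : ℤ}
    (hu : u = 1 ∨ u = -1) (h : 0 ≤ σ j * u) : (u : ℝ) = σ j := by
  rcases hσ j with hs | hs <;> rcases hu with rfl | rfl <;> norm_num [hs] at h <;> norm_num [hs]

lemma IsLocallyAntiBlocking.coord_eq_zero_of_dot_eq {P : Set (Fin d → ℝ)}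
    (hP : IsLocallyAntiBlocking P) {σ : Fin d → ℝ} (hσ : IsSignVec σ) {a : Fin d → ℤ} {b : ℝ}
    (hvalid : ∀ x ∈ P ∩ signedOrthant σ, dot (intCast a) x ≤ b) {j : Fin d}
    (hj : σ j * a j < 0) {x : Fin d → ℝ} (hx : x ∈ P ∩ signedOrthant σ)
    (hxb : dot (intCast a) x = b) : x j = 0 := by
  by_contra hxj
  set y := x - Pi.single j (x j)
  have hyP : y ∈ P := hP.mem_of_forall_eq_or_eq_zero hx.1 fun i => by
    rcases eq_or_ne i j with rfl | hi
    · simp [y]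
    · simp [y, hi]
  have hyO : y ∈ signedOrthant σ := fun i => by
    rcases eq_or_ne i j with rfl | hi
    · simp [y]
    · simpa [y, hi] using hx.2 i
  have hxpos : 0 < σ j * x j := (hx.2 j).lt_of_ne (mul_ne_zero (hσ.ne_zero j) hxj).symm
  have hdrop : (a j : ℝ) * x j < 0 := hσ.mul_mul_mul j (a j) (x j) ▸ mul_neg_of_neg_of_pos hj hxpos
  have := hvalid y ⟨hyP, hyO⟩
  rw [dot_sub_right, dot_single_right, hxb, intCastVec_apply] at this
  linarith

lemma IsFacetIneq.dot_eq_neg_coord {P : Set (Fin d → ℝ)} (hP : IsLocallyAntiBlocking P)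
    {σ : Fin d → ℝ} (hσ : IsSignVec σ) {a : Fin d → ℤ} {b : ℝ}
    (hF : IsFacetIneq (P ∩ signedOrthant σ) a b) (hgcd : univ.gcd a = 1) {j : Fin d}
    (hj : σ j * a j < 0) (x : Fin d → ℝ) : dot (intCast a) x = -(σ j * x j) := by
  obtain ⟨hdot, hunit⟩ := hF.eq_single hgcd fun y hy hyb =>
    hP.coord_eq_zero_of_dot_eq hσ hF.1 hj hy hyb
  rw [hdot, hσ.intCast_eq_neg hunit hj, neg_mul]

lemma IsFacetIneq.dot_eq_coord {Q : Set (Fin d → ℝ)} {σ : Fin d → ℝ} (hσ : IsSignVec σ)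
    {a : Fin d → ℤ} {b : ℝ} (hF : IsFacetIneq Q a b) (hgcd : univ.gcd a = 1)
    (ha : intCast a ∈ signedOrthant σ) {j : Fin d}
    (hj : ∀ x ∈ Q, dot (intCast a) x = b → x j = 0) (x : Fin d → ℝ) :
    dot (intCast a) x = σ j * x j := by
  obtain ⟨hdot, hunit⟩ := hF.eq_single hgcd hj
  rw [hdot, hσ.intCast_eq hunit (ha j)]

end Facets

lemma sSup_sub_sInf_image_eq_one {α : Type*} {Q : Set α} {f : α → ℝ} {c : ℝ}
    (hf : ∀ x ∈ Q, c ≤ f x ∧ f x ≤ c + 1) (hlo : ∃ x ∈ Q, f x = c)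
    (hhi : ∃ x ∈ Q, f x = c + 1) : sSup (f '' Q) - sInf (f '' Q) = 1 := by
  obtain ⟨x, hx, hfx⟩ := hlo
  obtain ⟨y, hy, hfy⟩ := hhi
  have hsup : IsGreatest (f '' Q) (c + 1) :=
    ⟨⟨y, hy, hfy⟩, by rintro _ ⟨z, hz, rfl⟩; exact (hf z hz).2⟩
  have hinf : IsLeast (f '' Q) c := ⟨⟨x, hx, hfx⟩, by rintro _ ⟨z, hz, rfl⟩; exact (hf z hz).1⟩
  rw [hsup.csSup_eq, hinf.csInf_eq]
  ring

section RelativeInterior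

variable {E : Type*} [AddCommGroup E] [Module ℝ E] [TopologicalSpace E] [ContinuousAdd E]
  [ContinuousSMul ℝ E]

lemma exists_pos_mem_of_continuousAt {X : Type*} [TopologicalSpace X] {f : ℝ → X}
    (hf : ContinuousAt f 0) {s : Set X} (hs : s ∈ 𝓝 (f 0)) : ∃ t : ℝ, 0 < t ∧ f t ∈ s := by
  obtain ⟨t, ht, htpos⟩ :=
    (((hf.tendsto.mono_left nhdsWithin_le_nhds).eventually hs).and
      (self_mem_nhdsWithin : Set.Ioi (0 : ℝ) ∈ 𝓝[>] 0)).exists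
  exact ⟨t, htpos, ht⟩

lemma exists_pos_add_smul_mem {s : Set E} {x : E} (hs : s ∈ 𝓝 x) (v : E) :
    ∃ t : ℝ, 0 < t ∧ x + t • v ∈ s :=
  exists_pos_mem_of_continuousAt (f := fun t : ℝ => x + t • v) (by fun_prop) (by simpa using hs)

lemma exists_pos_add_smul_sub_mem {T : Set E} {z y : E} (hz : z ∈ intrinsicInterior ℝ T)
    (hy : y ∈ T) : ∃ t : ℝ, 0 < t ∧ z + t • (z - y) ∈ T := by
  have hzT := intrinsicInterior_subset hz
  have hline : ∀ t : ℝ, z + t • (z - y) ∈ affineSpan ℝ T := fun t => by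
    simpa [add_comm] using AffineSubspace.smul_vsub_vadd_mem (affineSpan ℝ T) t
      (subset_affineSpan ℝ T hzT) (subset_affineSpan ℝ T hy) (subset_affineSpan ℝ T hzT)
  obtain ⟨w, hw, hwz⟩ := mem_intrinsicInterior.mp hz
  let γ : ℝ → affineSpan ℝ T := fun t => ⟨z + t • (z - y), hline t⟩
  have hγ0 : γ 0 = w := Subtype.ext (by simp [γ, hwz])
  obtain ⟨t, ht, hγt⟩ := exists_pos_mem_of_continuousAt (f := γ)
    (Continuous.subtype_mk (by fun_prop) _).continuousAt (hγ0 ▸ isOpen_interior.mem_nhds hw)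
  exact ⟨t, ht, (interior_subset hγt : γ t ∈ Subtype.val ⁻¹' T)⟩

lemma eq_of_le_of_mem_intrinsicInterior (f : E →ₗ[ℝ] ℝ) {T : Set E} {c : ℝ}
    (hle : ∀ y ∈ T, f y ≤ c) {z : E} (hz : z ∈ intrinsicInterior ℝ T) (hfz : f z = c)
    {y : E} (hy : y ∈ T) : f y = c := by
  obtain ⟨t, ht, hmem⟩ := exists_pos_add_smul_sub_mem hz hy
  have := hle _ hmem
  rw [map_add, map_smul, map_sub, hfz, smul_eq_mul] at this
  nlinarith [hle y hy]

end RelativeInterior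

section Forward

variable {d : ℕ} {P : Set (Fin d → ℝ)} {σ : Fin d → ℝ}

lemma convex_setOf_dot_le (A : Finset (Fin d → ℤ)) :
    Convex ℝ {x : Fin d → ℝ | ∀ a ∈ A, dot (intCast a) x ≤ 1} := by
  intro x hx y hy s t hs ht hst a ha
  rw [dot_add_right, dot_smul_right, dot_smul_right]
  nlinarith [hx a ha, hy a ha]

lemma mem_interior_setOf_dot_le {A : Finset (Fin d → ℤ)} {z : Fin d → ℝ}
    (h : ∀ a ∈ A, dot (intCast a) z < 1) :
    z ∈ interior {x : Fin d → ℝ | ∀ a ∈ A, dot (intCast a) x ≤ 1} := by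
  have hopen : IsOpen {x : Fin d → ℝ | ∀ a ∈ A, dot (intCast a) x < 1} := by
    simp only [Set.ofPred_forall]
    exact isOpen_biInter_finset fun a _ => isOpen_lt (continuous_dot _) continuous_const
  exact interior_maximal (fun x hx a ha => (hx a ha).le) hopen h

lemma dot_lt_of_mem_interior {Q : Set (Fin d → ℝ)} {a : Fin d → ℝ} (ha : a ≠ 0) {b : ℝ}
    (hvalid : ∀ x ∈ Q, dot a x ≤ b) {z : Fin d → ℝ} (hz : z ∈ interior Q) : dot a z < b := by
  obtain ⟨t, ht, hmem⟩ := exists_pos_add_smul_mem (mem_interior_iff_mem_nhds.mp hz) a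
  have := hvalid _ hmem
  rw [dot_add_right, dot_smul_right] at this
  nlinarith [dot_self_pos ha]

lemma exists_dot_eq_one_of_mul_pos {A : Finset (Fin d → ℤ)} {a : Fin d → ℝ} (ha : a ≠ 0) {b : ℝ}
    (hvalid : ∀ x ∈ {x | ∀ a ∈ A, dot (intCast a) x ≤ 1} ∩ signedOrthant σ, dot a x ≤ b)
    {z : Fin d → ℝ} (hz : z ∈ {x | ∀ a ∈ A, dot (intCast a) x ≤ 1} ∩ signedOrthant σ)
    (hzb : dot a z = b) (hzpos : ∀ j, 0 < σ j * z j) : ∃ a' ∈ A, dot (intCast a') z = 1 := by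
  by_contra! hlt
  have hzint : z ∈ interior ({x | ∀ a ∈ A, dot (intCast a) x ≤ 1} ∩ signedOrthant σ) := by
    rw [interior_inter]
    exact ⟨mem_interior_setOf_dot_le fun a' h => (hz.1 a' h).lt_of_ne (hlt a' h),
      mem_interior_signedOrthant hzpos⟩
  exact (dot_lt_of_mem_interior ha hvalid hzint).ne hzb

lemma IsSignVec.mul_pos_of_mem_intrinsicInterior (hσ : IsSignVec σ) {T : Set (Fin d → ℝ)}
    (hT : T ⊆ signedOrthant σ) {z : Fin d → ℝ} (hz : z ∈ intrinsicInterior ℝ T) {j : Fin d}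
    (hj : ∃ x ∈ T, x j ≠ 0) : 0 < σ j * z j := by
  refine (hT (intrinsicInterior_subset hz) j).lt_of_ne fun hzero => ?_
  obtain ⟨x, hx, hxj⟩ := hj
  have hval : ∀ y, dotProductEquiv ℝ (Fin d) (Pi.single j (-σ j)) y = -(σ j * y j) := fun y => by
    rw [dotProductEquiv_apply_eq_dot, dot_single_left, neg_mul]
  have := eq_of_le_of_mem_intrinsicInterior _
    (fun y hy => (hval y).trans_le (by linarith [hT hy j] : -(σ j * y j) ≤ 0)) hz
    ((hval z).trans (by rw [← hzero, neg_zero])) hx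
  rw [hval, neg_eq_zero] at this
  exact hxj ((mul_eq_zero.mp this).resolve_left (hσ.ne_zero j))

lemma exists_single_mem_of_eq_convexHull {V : Finset (Fin d → ℤ)}
    (hP : P = convexHull ℝ (intCast '' (V : Set (Fin d → ℤ)))) (hV : V.Nonempty)
    (hlab : IsLocallyAntiBlocking P) (h0 : 0 ∈ interior P) (hσ : IsSignVec σ) (j : Fin d) :
    ∃ m : ℝ, 1 ≤ m ∧ Pi.single j (σ j * m) ∈ P ∧ ∀ x ∈ P, σ j * x j ≤ m := by
  obtain ⟨v, hv, hvmax⟩ := V.exists_max_image (fun v => σ j * v j) hV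
  have hbound : ∀ x ∈ P, σ j * x j ≤ σ j * v j := fun x hx => by
    simpa [dot_single_left] using
      dot_le_of_mem_convexHull (W := intCast '' ↑V) (a := Pi.single j (σ j))
        (by rintro _ ⟨w, hw, rfl⟩; simpa [dot_single_left] using hvmax w hw) (hP ▸ hx)
  obtain ⟨t, ht, htP⟩ :=
    exists_pos_add_smul_mem (mem_interior_iff_mem_nhds.mp h0) (Pi.single j (σ j))
  have hpos : 0 < σ j * v j := by
    have := hbound _ htP
    rw [zero_add, Pi.smul_apply, Pi.single_eq_same, smul_eq_mul, mul_left_comm,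
      hσ.mul_self, mul_one] at this
    linarith
  refine ⟨σ j * v j, hσ.one_le_mul_intCast hpos, ?_, hbound⟩
  rw [← mul_assoc, hσ.mul_self, one_mul]
  have hvP : intCast v ∈ P := hP ▸ subset_convexHull ℝ _ ⟨v, hv, rfl⟩
  refine hlab.mem_of_forall_eq_or_eq_zero hvP fun i => ?_
  rcases eq_or_ne i j with rfl | hi
  · simp
  · simp [hi]

lemma le_one_of_single_mem {A : Finset (Fin d → ℤ)}
    (hA : P = {x | ∀ a ∈ A, dot (intCast a) x ≤ 1}) (hσ : IsSignVec σ) {j : Fin d} {m : ℝ}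
    (hm : 0 ≤ m) (hmem : Pi.single j (σ j * m) ∈ P) (hbound : ∀ x ∈ P, σ j * x j ≤ m) :
    m ≤ 1 := by
  have hout : Pi.single j (σ j * (m + 1)) ∉ P := fun h => by
    have := hbound _ h
    rw [Pi.single_eq_same, ← mul_assoc, hσ.mul_self, one_mul] at this
    linarith
  subst hA
  simp only [Set.mem_ofPred_eq, not_forall, not_le] at hout
  obtain ⟨a, ha, hlt⟩ := hout
  have hle := hmem a ha
  rw [dot_single_right, intCastVec_apply] at hlt hle
  have hpos : 0 < σ j * a j := by nlinarith
  nlinarith [hσ.one_le_mul_intCast hpos]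

lemma single_mem_and_coord_le_one {V : Finset (Fin d → ℤ)} {A : Finset (Fin d → ℤ)}
    (hP : P = convexHull ℝ (intCast '' (V : Set (Fin d → ℤ)))) (hV : V.Nonempty)
    (hlab : IsLocallyAntiBlocking P) (h0 : 0 ∈ interior P)
    (hA : P = {x | ∀ a ∈ A, dot (intCast a) x ≤ 1}) (hσ : IsSignVec σ) (j : Fin d) :
    Pi.single j (σ j) ∈ P ∧ ∀ x ∈ P, σ j * x j ≤ 1 := by
  obtain ⟨m, hm1, hmem, hbound⟩ := exists_single_mem_of_eq_convexHull hP hV hlab h0 hσ j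
  obtain rfl : m = 1 := le_antisymm (le_one_of_single_mem hA hσ (by linarith) hmem hbound) hm1
  exact ⟨by simpa using hmem, hbound⟩

lemma IsFacetIneq.dot_le_one {A : Finset (Fin d → ℤ)}
    (hA : P = {x | ∀ a ∈ A, dot (intCast a) x ≤ 1}) (hσ : IsSignVec σ) {a : Fin d → ℤ} {b : ℝ}
    (hF : IsFacetIneq (P ∩ signedOrthant σ) a b) (hgcd : univ.gcd a = 1)
    (ha : intCast a ∈ signedOrthant σ)
    (hall : ∀ j, ∃ x ∈ P ∩ signedOrthant σ, dot (intCast a) x = b ∧ x j ≠ 0) :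
    ∀ x ∈ P ∩ signedOrthant σ, dot (intCast a) x ≤ 1 := by
  subst hA
  set T := {x | x ∈ {x | ∀ a ∈ A, dot (intCast a) x ≤ 1} ∩ signedOrthant σ ∧
    dot (intCast a) x = b}
  have hne := intCast_ne_zero_of_gcd_eq_one hgcd
  have hTconv : Convex ℝ T := ((convex_setOf_dot_le A).inter (convex_signedOrthant σ)).inter
    (convex_hyperplane ⟨dot_add_right _, fun c x => dot_smul_right _ x c⟩ b)
  obtain ⟨j₀, -⟩ := Function.ne_iff.mp hne
  obtain ⟨x₀, hx₀, hx₀b, -⟩ := hall j₀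
  obtain ⟨z, hz⟩ := Set.Nonempty.intrinsicInterior hTconv (show T.Nonempty from ⟨x₀, hx₀, hx₀b⟩)
  have hzT : z ∈ T := intrinsicInterior_subset hz
  have hzpos : ∀ j, 0 < σ j * z j := fun j =>
    hσ.mul_pos_of_mem_intrinsicInterior (fun x hx => hx.1.2) hz
      (by obtain ⟨x, hx, hxb, hxj⟩ := hall j; exact ⟨x, ⟨hx, hxb⟩, hxj⟩)
  obtain ⟨a', ha'A, ha'z⟩ := exists_dot_eq_one_of_mul_pos hne hF.1 hzT.1 hzT.2 hzpos
  have htight : ∀ y ∈ T, dot (intCast a') y = 1 := fun y hy =>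
    eq_of_le_of_mem_intrinsicInterior (dotProductEquiv ℝ (Fin d) (intCast a'))
      (fun y hy => hy.1.1 a' ha'A) hz ha'z hy
  obtain ⟨c, hc⟩ := hF.exists_eq_smul hne fun x hx hxb => htight x ⟨hx, hxb⟩
  obtain ⟨k, rfl⟩ := exists_int_eq_of_intCast_eq_smul hgcd hc
  have hk : (1 : ℝ) ≤ k := by
    have hkz : (k : ℝ) * dot (intCast a) z = 1 := by rw [← dot_smul_left, ← hc, ha'z]
    have hkpos : (0 : ℤ) < k := by
      exact_mod_cast pos_of_mul_pos_left (hkz ▸ one_pos) (hσ.dot_nonneg ha hzT.1.2)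
    exact_mod_cast hkpos
  intro x hx
  have hkx : (k : ℝ) * dot (intCast a) x ≤ 1 := by
    rw [← dot_smul_left, ← hc]
    exact hx.1 a' ha'A
  nlinarith [hσ.dot_nonneg ha hx.2]

lemma IsFacetIneq.dot_le_one_of_mem_signedOrthant {A : Finset (Fin d → ℤ)}
    (hA : P = {x | ∀ a ∈ A, dot (intCast a) x ≤ 1}) (hσ : IsSignVec σ)
    (hcoord : ∀ j, ∀ x ∈ P, σ j * x j ≤ 1) {a : Fin d → ℤ} {b : ℝ}
    (hF : IsFacetIneq (P ∩ signedOrthant σ) a b) (hgcd : univ.gcd a = 1)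
    (ha : intCast a ∈ signedOrthant σ) :
    ∀ x ∈ P ∩ signedOrthant σ, dot (intCast a) x ≤ 1 := by
  by_cases hcoordFacet : ∃ j, ∀ x ∈ P ∩ signedOrthant σ, dot (intCast a) x = b → x j = 0
  · obtain ⟨j, hj⟩ := hcoordFacet
    intro x hx
    rw [hF.dot_eq_coord hσ hgcd ha hj]
    exact hcoord j x hx.1
  · push Not at hcoordFacet
    exact hF.dot_le_one hA hσ hgcd ha hcoordFacet

theorem hasFacetWidthOne_of_isReflexive {V : Finset (Fin d → ℤ)}
    (hP : P = convexHull ℝ (intCast '' (V : Set (Fin d → ℤ)))) (hV : V.Nonempty)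
    (hlab : IsLocallyAntiBlocking P) (hrefl : IsReflexive P) (hσ : IsSignVec σ) :
    HasFacetWidthOne (P ∩ signedOrthant σ) := by
  obtain ⟨h0, A, hA⟩ := hrefl
  intro a b hgcd hF
  have hsingle := single_mem_and_coord_le_one hP hV hlab h0 hA hσ
  have h0Q : (0 : Fin d → ℝ) ∈ P ∩ signedOrthant σ :=
    ⟨interior_subset h0, zero_mem_signedOrthant σ⟩
  by_cases ha : intCast a ∈ signedOrthant σ
  · have hle := hF.dot_le_one_of_mem_signedOrthant hA hσ (fun j => (hsingle j).2) hgcd ha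
    obtain ⟨j, hj⟩ := Function.ne_iff.mp (intCast_ne_zero_of_gcd_eq_one hgcd)
    have hsj : Pi.single j (σ j) ∈ P ∩ signedOrthant σ :=
      ⟨(hsingle j).1, single_mem_signedOrthant hσ j⟩
    have hval : dot (intCast a) (Pi.single j (σ j)) = 1 := by
      refine le_antisymm (hle _ hsj) ?_
      rw [dot_single_right, mul_comm]
      exact hσ.one_le_mul_intCast ((ha j).lt_of_ne (mul_ne_zero (hσ.ne_zero j) hj).symm)
    refine sSup_sub_sInf_image_eq_one (c := 0) (fun x hx => ⟨hσ.dot_nonneg ha hx.2, ?_⟩)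
      ⟨0, h0Q, by simp [dot]⟩ ⟨_, hsj, by rw [hval, zero_add]⟩
    simpa using hle x hx
  · obtain ⟨j, hj⟩ := exists_mul_neg_of_notMem_signedOrthant ha
    have hdot := hF.dot_eq_neg_coord hlab hσ hgcd hj
    refine sSup_sub_sInf_image_eq_one (c := -1) (fun x hx => ?_) ⟨_, ⟨(hsingle j).1,
      single_mem_signedOrthant hσ j⟩, by simp [hdot, hσ.mul_self]⟩ ⟨0, h0Q, by simp [hdot]⟩
    rw [hdot]
    constructor <;> linarith [(hsingle j).2 x hx.1, hx.2 j]

end Forward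

section FourierMotzkin

variable {n : ℕ}

def intPolyhedron (F : Finset ((Fin n → ℤ) × ℝ)) : Set (Fin n → ℝ) :=
  {x | ∀ p ∈ F, dot (intCast p.1) x ≤ p.2}

lemma intPolyhedron_anti {F G : Finset ((Fin n → ℤ) × ℝ)} (h : F ⊆ G) :
    intPolyhedron G ⊆ intPolyhedron F :=
  fun _ hx p hp => hx p (h hp)

lemma dot_intCast_snoc (w : Fin (n + 1) → ℤ) (y : Fin n → ℝ) (t : ℝ) :
    dot (intCast w) (Fin.snoc y t) = dot (intCast (Fin.init w)) y + w (Fin.last n) * t := by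
  simp [dot, Fin.sum_univ_castSucc, Fin.init]

lemma dot_intCast_smul_add_smul (c e : ℤ) (p q : Fin n → ℤ) (x : Fin n → ℝ) :
    dot (intCast (c • p + e • q)) x = c * dot (intCast p) x + e * dot (intCast q) x := by
  simp only [dot, intCastVec_apply, Pi.add_apply, Pi.smul_apply, smul_eq_mul, mul_sum,
    ← sum_add_distrib]
  push_cast
  exact sum_congr rfl fun i _ => by ring

/-- One step of Fourier–Motzkin elimination: the last variable is eliminated by keeping the
inequalities not involving it and adding all positive combinations of pairs of inequalities in
which it has opposite signs that cancel it. -/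
noncomputable def fmElim (S : Finset ((Fin (n + 1) → ℤ) × ℝ)) : Finset ((Fin n → ℤ) × ℝ) :=
  (S.filter fun p => p.1 (Fin.last n) = 0).image (fun p => (Fin.init p.1, p.2)) ∪
    ((S.filter fun p => 0 < p.1 (Fin.last n)) ×ˢ (S.filter fun p => p.1 (Fin.last n) < 0)).image
      fun pq => (Fin.init ((-pq.2.1 (Fin.last n)) • pq.1.1 + pq.1.1 (Fin.last n) • pq.2.1),
        ((-pq.2.1 (Fin.last n) : ℤ) : ℝ) * pq.1.2 + (pq.1.1 (Fin.last n) : ℝ) * pq.2.2)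

lemma exists_forall_le_and_forall_ge {L R : Finset ℝ} (h : ∀ l ∈ L, ∀ r ∈ R, l ≤ r) :
    ∃ t, (∀ l ∈ L, l ≤ t) ∧ ∀ r ∈ R, t ≤ r := by
  rcases L.eq_empty_or_nonempty with rfl | hL
  · rcases R.eq_empty_or_nonempty with rfl | hR
    · exact ⟨0, by simp, by simp⟩
    · exact ⟨R.min' hR, by simp, fun r hr => R.min'_le r hr⟩
  · exact ⟨L.max' hL, fun l hl => L.le_max' l hl, fun r hr => h _ (L.max'_mem hL) r hr⟩

lemma dot_intCast_fmCombination {p q : (Fin (n + 1) → ℤ) × ℝ} (y : Fin n → ℝ) (t : ℝ) :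
    dot (intCast (Fin.init ((-q.1 (Fin.last n)) • p.1 + p.1 (Fin.last n) • q.1))) y =
      (-q.1 (Fin.last n) : ℤ) * dot (intCast p.1) (Fin.snoc y t) +
        (p.1 (Fin.last n) : ℝ) * dot (intCast q.1) (Fin.snoc y t) := by
  rw [← dot_intCast_smul_add_smul, dot_intCast_snoc]
  simp only [Pi.add_apply, Pi.smul_apply, smul_eq_mul]
  ring_nf
  simp

lemma exists_snoc_mem_intPolyhedron {S : Finset ((Fin (n + 1) → ℤ) × ℝ)} {y : Fin n → ℝ}
    (hy : y ∈ intPolyhedron (fmElim S)) : ∃ t, Fin.snoc y t ∈ intPolyhedron S := by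
  -- `D p` bounds the last coordinate: from above if its coefficient in `p` is positive, from below
  -- if it is negative
  set D : (Fin (n + 1) → ℤ) × ℝ → ℝ := fun p =>
    (p.2 - dot (intCast (Fin.init p.1)) y) / p.1 (Fin.last n)
  have hpair : ∀ q ∈ S.filter (fun p => p.1 (Fin.last n) < 0),
      ∀ p ∈ S.filter (fun p => 0 < p.1 (Fin.last n)), D q ≤ D p := by
    intro q hq p hp
    have hβ : ((q.1 (Fin.last n) : ℤ) : ℝ) < 0 := by exact_mod_cast (mem_filter.1 hq).2
    have hα : (0 : ℝ) < p.1 (Fin.last n) := by exact_mod_cast (mem_filter.1 hp).2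
    have hcomb := hy _
      (mem_union_right _ (mem_image_of_mem _ (mem_product.2 ⟨hp, hq⟩ : (p, q) ∈ _)))
    rw [dot_intCast_fmCombination y 0, dot_intCast_snoc, dot_intCast_snoc] at hcomb
    simp only [D]
    rw [div_le_iff_of_neg hβ, div_mul_eq_mul_div, div_le_iff₀ hα]
    push_cast at hcomb
    nlinarith
  obtain ⟨t, hlo, hhi⟩ := exists_forall_le_and_forall_ge
    (L := (S.filter fun p => p.1 (Fin.last n) < 0).image D)
    (R := (S.filter fun p => 0 < p.1 (Fin.last n)).image D)
    (by simpa only [forall_mem_image] using hpair)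
  refine ⟨t, fun p hp => ?_⟩
  rw [dot_intCast_snoc]
  rcases lt_trichotomy (p.1 (Fin.last n)) 0 with hneg | hzero | hpos
  · have := hlo _ (mem_image_of_mem D (mem_filter.2 ⟨hp, hneg⟩))
    rw [div_le_iff_of_neg (by exact_mod_cast hneg)] at this
    linarith
  · have := hy _ (mem_union_left _ (mem_image_of_mem _ (mem_filter.2 ⟨hp, hzero⟩)))
    simpa [hzero] using this
  · have := hhi _ (mem_image_of_mem D (mem_filter.2 ⟨hp, hpos⟩))
    rw [le_div_iff₀ (by exact_mod_cast hpos)] at this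
    linarith

lemma mem_intPolyhedron_fmElim {S : Finset ((Fin (n + 1) → ℤ) × ℝ)} {y : Fin n → ℝ} :
    y ∈ intPolyhedron (fmElim S) ↔ ∃ t, Fin.snoc y t ∈ intPolyhedron S := by
  refine ⟨exists_snoc_mem_intPolyhedron, ?_⟩
  rintro ⟨t, ht⟩ r hr
  simp only [fmElim, mem_union, mem_image, mem_filter, mem_product] at hr
  rcases hr with ⟨p, ⟨hp, hp0⟩, rfl⟩ | ⟨⟨p, q⟩, ⟨⟨hp, hα⟩, hq, hβ⟩, rfl⟩
  · simpa [dot_intCast_snoc, hp0] using ht p hp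
  · have hα' : (0 : ℝ) < p.1 (Fin.last n) := by exact_mod_cast hα
    have hβ' : ((q.1 (Fin.last n) : ℤ) : ℝ) < 0 := by exact_mod_cast hβ
    rw [dot_intCast_fmCombination y t]
    push_cast
    nlinarith [ht p hp, ht q hq]

lemma exists_intPolyhedron_eq_setOf_append :
    ∀ (m : ℕ) (S : Finset ((Fin (n + m) → ℤ) × ℝ)), ∃ S' : Finset ((Fin n → ℤ) × ℝ),
      intPolyhedron S' = {x | ∃ μ : Fin m → ℝ, Fin.append x μ ∈ intPolyhedron S}
  | 0, S => ⟨S, by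
      ext x
      have happ : ∀ μ : Fin 0 → ℝ, Fin.append x μ = x := fun μ => by
        rw [Subsingleton.elim μ Fin.elim0, Fin.append_elim0]
        rfl
      simp [happ]⟩
  | m + 1, S => by
      obtain ⟨S', hS'⟩ := exists_intPolyhedron_eq_setOf_append m
        (fmElim (S : Finset ((Fin (n + m + 1) → ℤ) × ℝ)))
      refine ⟨S', hS'.trans (Set.ext fun x => ?_)⟩
      simp only [Set.mem_ofPred_eq, mem_intPolyhedron_fmElim]
      constructor
      · rintro ⟨μ, t, h⟩
        exact ⟨Fin.snoc μ t, by rwa [Fin.append_snoc]⟩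
      · rintro ⟨μ, h⟩
        exact ⟨Fin.init μ, μ (Fin.last m), by rwa [← Fin.append_snoc, Fin.snoc_init_self]⟩

end FourierMotzkin

section HullSystem

variable {d m : ℕ}

lemma convexHull_range_eq_image_stdSimplex {ι E : Type*} [Fintype ι] [AddCommGroup E]
    [Module ℝ E] (v : ι → E) :
    convexHull ℝ (Set.range v) = (fun μ => ∑ k, μ k • v k) '' stdSimplex ℝ ι := by
  classical
  have hL : (fun μ : ι → ℝ => ∑ k, μ k • v k) = Fintype.linearCombination ℝ v :=
    funext fun μ => (Fintype.linearCombination_apply ℝ v μ).symm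
  rw [← convexHull_rangle_single_eq_stdSimplex, hL, LinearMap.image_convexHull, ← Set.range_comp]
  simp [Function.comp_def, Fintype.linearCombination_apply_single]

lemma dot_intCast_append (u : Fin d → ℤ) (w : Fin m → ℤ) (x : Fin d → ℝ) (μ : Fin m → ℝ) :
    dot (intCast (Fin.append u w)) (Fin.append x μ) = dot (intCast u) x + dot (intCast w) μ := by
  simp [dot, Fin.sum_univ_add]

/-- The system `x = ∑ k, μ k • v k`, `μ ≥ 0`, `∑ k, μ k = 1` in the variables `(x, μ)`. -/
noncomputable def hullSystem (v : Fin m → Fin d → ℤ) : Finset ((Fin (d + m) → ℤ) × ℝ) :=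
  (univ.image fun j => (Fin.append (Pi.single j 1) (fun k => -v k j), 0)) ∪
    (univ.image fun j => (Fin.append (-Pi.single j 1) (fun k => v k j), 0)) ∪
    (univ.image fun k => (Fin.append 0 (-Pi.single k 1), 0)) ∪
    {(Fin.append 0 1, 1), (Fin.append 0 (-1), -1)}

lemma append_mem_intPolyhedron_hullSystem (v : Fin m → Fin d → ℤ) (x : Fin d → ℝ)
    (μ : Fin m → ℝ) :
    Fin.append x μ ∈ intPolyhedron (hullSystem v) ↔
      μ ∈ stdSimplex ℝ (Fin m) ∧ ∑ k, μ k • intCast (v k) = x := by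
  have hcoord : ∀ j, (∑ k, μ k • intCast (v k)) j = ∑ k, (v k j : ℝ) * μ k := fun j => by
    simp [mul_comm]
  simp only [intPolyhedron, hullSystem, Set.mem_ofPred_eq, forall_mem_union, forall_mem_image,
    forall_mem_insert, mem_singleton, mem_univ, forall_const, dot_intCast_append]
  simp [dot, Pi.single_apply, stdSimplex, funext_iff, hcoord, Fin.sum_univ_add]
  constructor
  · rintro ⟨⟨⟨hle, hge⟩, hμ⟩, hsum, hsum'⟩
    exact ⟨⟨fun k => hμ (x := k), le_antisymm hsum hsum'⟩,
      fun j => le_antisymm (hge (x := j)) (hle (x := j))⟩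
  · rintro ⟨⟨hμ, hsum⟩, hx⟩
    exact ⟨⟨⟨fun j => (hx j).ge, fun j => (hx j).le⟩, fun k => hμ k⟩, hsum.le, hsum.ge⟩

end HullSystem

section HPresentation

variable {d : ℕ}

theorem exists_intPolyhedron_eq_convexHull (V : Finset (Fin d → ℤ)) :
    ∃ F : Finset ((Fin d → ℤ) × ℝ),
      intPolyhedron F = convexHull ℝ (intCast '' (V : Set (Fin d → ℤ))) := by
  set v : Fin V.card → Fin d → ℤ := fun k => V.equivFin.symm k
  have hrange : intCast '' (V : Set (Fin d → ℤ)) = Set.range fun k => intCast (v k) := by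
    ext y
    constructor
    · rintro ⟨w, hw, rfl⟩
      exact ⟨V.equivFin ⟨w, hw⟩, by simp [v]⟩
    · rintro ⟨k, rfl⟩
      exact ⟨_, (V.equivFin.symm k).2, rfl⟩
  obtain ⟨F, hF⟩ := exists_intPolyhedron_eq_setOf_append V.card (hullSystem v)
  refine ⟨F, hF.trans ?_⟩
  rw [hrange, convexHull_range_eq_image_stdSimplex]
  ext x
  simp [append_mem_intPolyhedron_hullSystem]

lemma gcd_pos_of_ne_zero {a : Fin d → ℤ} (ha : a ≠ 0) : 0 < univ.gcd a :=
  (Int.nonneg_of_normalize_eq_self Finset.normalize_gcd).lt_of_ne fun h =>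
    ha (funext fun i => Finset.gcd_eq_zero_iff.mp h.symm i (mem_univ i))

lemma intCast_eq_gcd_smul (a : Fin d → ℤ) :
    intCast a = ((univ.gcd a : ℤ) : ℝ) • intCast fun i => a i / univ.gcd a := funext fun i => by
  simp only [intCastVec_apply, Pi.smul_apply, smul_eq_mul]
  exact_mod_cast (Int.mul_ediv_cancel' (Finset.gcd_dvd (mem_univ i))).symm

/-- Divide each inequality by the gcd of its normal; those with zero normal hold at `0`, hence
everywhere, and are dropped. -/
lemma exists_primitive_intPolyhedron_eq {F : Finset ((Fin d → ℤ) × ℝ)}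
    (h0 : 0 ∈ intPolyhedron F) : ∃ F' : Finset ((Fin d → ℤ) × ℝ),
      intPolyhedron F' = intPolyhedron F ∧ ∀ p ∈ F', univ.gcd p.1 = 1 := by
  set prim : (Fin d → ℤ) × ℝ → (Fin d → ℤ) × ℝ :=
    fun p => (fun i => p.1 i / univ.gcd p.1, p.2 / univ.gcd p.1)
  have hiff : ∀ p : (Fin d → ℤ) × ℝ, p.1 ≠ 0 → ∀ x,
      dot (intCast (prim p).1) x ≤ (prim p).2 ↔ dot (intCast p.1) x ≤ p.2 := fun p hp x => by
    have hg : (0 : ℝ) < univ.gcd p.1 := by exact_mod_cast gcd_pos_of_ne_zero hp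
    rw [intCast_eq_gcd_smul p.1, dot_smul_left, le_div_iff₀ hg, mul_comm]
  refine ⟨(F.filter fun p => p.1 ≠ 0).image prim, Set.ext fun x => ?_, ?_⟩
  · simp only [intPolyhedron, Set.mem_ofPred_eq, forall_mem_image, mem_filter, and_imp]
    refine ⟨fun hx p hp => ?_, fun hx p hp hp0 => (hiff p hp0 x).mpr (hx p hp)⟩
    by_cases hp0 : p.1 = 0
    · simpa [hp0, dot] using h0 p hp
    · exact (hiff p hp0 x).mp (hx hp hp0)
  · simp only [forall_mem_image, mem_filter, and_imp]
    intro p _ hp0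
    obtain ⟨i, hi⟩ := Function.ne_iff.mp hp0
    exact Finset.gcd_div_eq_one (mem_univ i) hi

lemma exists_irredundant_subset (F : Finset ((Fin d → ℤ) × ℝ)) :
    ∃ M ⊆ F, intPolyhedron M = intPolyhedron F ∧
      ∀ p ∈ M, ¬ intPolyhedron (M.erase p) ⊆ intPolyhedron M := by
  obtain ⟨M, hM, hmin⟩ :=
    (F.powerset.filter fun M => intPolyhedron M = intPolyhedron F).exists_min_image card
      ⟨F, by simp⟩
  rw [mem_filter, mem_powerset] at hM
  refine ⟨M, hM.1, hM.2, fun p hp hsub => ?_⟩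
  have := hmin (M.erase p) (mem_filter.2 ⟨mem_powerset.2 ((erase_subset p M).trans hM.1),
    (hsub.antisymm (intPolyhedron_anti (erase_subset p M))).trans hM.2⟩)
  exact (card_erase_lt_of_mem hp).not_ge this

lemma ker_dot_le_vectorSpan {T : Set (Fin d → ℝ)} {a y : Fin d → ℝ} (hy : y ∈ T)
    (hT : ∀ᶠ x in 𝓝 y, dot a x = dot a y → x ∈ T) :
    LinearMap.ker (dotProductEquiv ℝ (Fin d) a) ≤ vectorSpan ℝ T := by
  intro u hu
  rw [LinearMap.mem_ker, dotProductEquiv_apply_eq_dot] at hu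
  obtain ⟨t, ht, hmem⟩ := exists_pos_add_smul_mem hT u
  have hvsub := vsub_mem_vectorSpan ℝ (hmem (by rw [dot_add_right, dot_smul_right, hu,
    mul_zero, add_zero])) hy
  rw [vsub_eq_sub, add_sub_cancel_left] at hvsub
  simpa [ht.ne'] using (vectorSpan ℝ T).smul_mem t⁻¹ hvsub

lemma exists_dot_eq_and_forall_lt {F : Finset ((Fin d → ℤ) × ℝ)} {p : (Fin d → ℤ) × ℝ}
    {x₀ z : Fin d → ℝ} (hx₀ : ∀ q ∈ F, dot (intCast q.1) x₀ < q.2) (hp : p ∈ F)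
    (hz : z ∈ intPolyhedron (F.erase p)) (hzp : p.2 < dot (intCast p.1) z) :
    ∃ y, dot (intCast p.1) y = p.2 ∧ ∀ q ∈ F.erase p, dot (intCast q.1) y < q.2 := by
  set s := (p.2 - dot (intCast p.1) x₀) / (dot (intCast p.1) z - dot (intCast p.1) x₀)
  have hgap : 0 < dot (intCast p.1) z - dot (intCast p.1) x₀ := by linarith [hx₀ p hp]
  have hs0 : 0 < s := div_pos (by linarith [hx₀ p hp]) hgap
  have hs1 : s < 1 := (div_lt_one hgap).mpr (by linarith)
  have hdot : ∀ q : (Fin d → ℤ) × ℝ, dot (intCast q.1) (x₀ + s • (z - x₀)) =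
      (1 - s) * dot (intCast q.1) x₀ + s * dot (intCast q.1) z := fun q => by
    rw [dot_add_right, dot_smul_right, dot_sub_right]
    ring
  refine ⟨x₀ + s • (z - x₀), ?_, fun q hq => ?_⟩
  · rw [hdot, show ∀ A B : ℝ, (1 - s) * A + s * B = A + s * (B - A) from fun A B => by ring,
      div_mul_cancel₀ _ hgap.ne']
    ring
  · rw [hdot]
    nlinarith [hx₀ q (mem_of_mem_erase hq), hz q hq]

/-- An irredundant inequality of a system with an interior solution defines a facet: near a point
where it is tight and all other inequalities are strict, the facet fills out the hyperplane. -/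
lemma isFacetIneq_of_not_subset {F : Finset ((Fin d → ℤ) × ℝ)} {p : (Fin d → ℤ) × ℝ}
    (hp : p ∈ F) (hF0 : ∀ q ∈ F, intCast q.1 ≠ 0) {x₀ : Fin d → ℝ}
    (hx₀ : x₀ ∈ interior (intPolyhedron F))
    (hirr : ¬ intPolyhedron (F.erase p) ⊆ intPolyhedron F) :
    IsFacetIneq (intPolyhedron F) p.1 p.2 := by
  have hstrict : ∀ q ∈ F, dot (intCast q.1) x₀ < q.2 := fun q hq =>
    dot_lt_of_mem_interior (hF0 q hq) (fun x (hx : x ∈ intPolyhedron F) => hx q hq) hx₀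
  obtain ⟨z, hzF, hzp⟩ : ∃ z ∈ intPolyhedron (F.erase p), p.2 < dot (intCast p.1) z := by
    obtain ⟨z, hz, hzF⟩ := Set.not_subset.mp hirr
    refine ⟨z, hz, not_le.mp fun hle => hzF fun q hq => ?_⟩
    change ∀ q ∈ F.erase p, _ at hz
    rcases eq_or_ne q p with rfl | hqp
    · exact hle
    · exact hz q (mem_erase.2 ⟨hqp, hq⟩)
  obtain ⟨y, hyp, hyU⟩ := exists_dot_eq_and_forall_lt hstrict hp hzF hzp
  have hopen : IsOpen {x | ∀ q ∈ F.erase p, dot (intCast q.1) x < q.2} := by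
    simp only [Set.ofPred_forall]
    exact isOpen_biInter_finset fun q _ => isOpen_lt (continuous_dot _) continuous_const
  have hmemT : ∀ x ∈ {x | ∀ q ∈ F.erase p, dot (intCast q.1) x < q.2},
      dot (intCast p.1) x = p.2 → x ∈ {x | x ∈ intPolyhedron F ∧ dot (intCast p.1) x = p.2} :=
    fun x hx hxp => ⟨fun q hq => by
      rcases eq_or_ne q p with rfl | hqp
      · exact hxp.le
      · exact (hx q (mem_erase.2 ⟨hqp, hq⟩)).le, hxp⟩
  have hspan := (vectorSpan_le_ker_dot fun x hx => hx.2).antisymm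
    (ker_dot_le_vectorSpan (hmemT y hyU hyp) (Filter.mem_of_superset (hopen.mem_nhds hyU)
      fun x hx hxy => hmemT x hx (hxy.trans hyp)))
  exact ⟨fun x hx => hx p hp, by rw [hspan, finrank_ker_dot (hF0 p hp)]⟩

end HPresentation

section Backward

variable {d : ℕ} {P : Set (Fin d → ℝ)} {σ : Fin d → ℝ}

lemma finite_setOf_isSignVec : {σ : Fin d → ℝ | IsSignVec σ}.Finite := by
  have : {σ : Fin d → ℝ | IsSignVec σ} = Set.univ.pi fun _ => {1, -1} := by
    ext σ
    simp [IsSignVec]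
  rw [this]
  exact Set.Finite.pi fun _ => by simp

noncomputable def truncateToOrthant (σ x : Fin d → ℝ) : Fin d → ℝ :=
  fun i => if 0 ≤ σ i * x i then x i else 0

lemma IsLocallyAntiBlocking.truncateToOrthant_mem (hP : IsLocallyAntiBlocking P)
    {x : Fin d → ℝ} (hx : x ∈ P) (σ : Fin d → ℝ) :
    truncateToOrthant σ x ∈ P ∩ signedOrthant σ := by
  refine ⟨hP.mem_of_forall_eq_or_eq_zero hx fun i => ?_, fun i => ?_⟩ <;>
    by_cases h : 0 ≤ σ i * x i <;> simp [truncateToOrthant, h]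

lemma IsSignVec.dot_le_dot_truncateToOrthant (hσ : IsSignVec σ) {a : Fin d → ℝ}
    (ha : a ∈ signedOrthant σ) (x : Fin d → ℝ) : dot a x ≤ dot a (truncateToOrthant σ x) := by
  rw [hσ.dot_eq_sum, hσ.dot_eq_sum]
  refine sum_le_sum fun i _ => ?_
  by_cases h : 0 ≤ σ i * x i
  · simp [truncateToOrthant, h]
  · simp only [truncateToOrthant, h, if_false, mul_zero]
    nlinarith [ha i]

lemma nonempty_interior_inter_signedOrthant (h0 : 0 ∈ interior P) (hσ : IsSignVec σ) :
    (interior (P ∩ signedOrthant σ)).Nonempty := by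
  obtain ⟨t, ht, hmem⟩ := exists_pos_add_smul_mem (isOpen_interior.mem_nhds h0) σ
  refine ⟨0 + t • σ, ?_⟩
  rw [interior_inter]
  refine ⟨hmem, mem_interior_signedOrthant fun i => ?_⟩
  simpa [mul_left_comm, hσ.mul_self] using ht

lemma exists_primitive_intPolyhedron_eq_inter {F₀ : Finset ((Fin d → ℤ) × ℝ)}
    (hF₀ : intPolyhedron F₀ = P) (h0 : 0 ∈ P) (hσ : IsSignVec σ) :
    ∃ F : Finset ((Fin d → ℤ) × ℝ),
      intPolyhedron F = P ∩ signedOrthant σ ∧ ∀ p ∈ F, univ.gcd p.1 = 1 := by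
  obtain ⟨s, hs⟩ := hσ.exists_intCast_eq
  have hG : intPolyhedron (F₀ ∪ univ.image fun j => (-Pi.single j (s j), 0)) =
      P ∩ signedOrthant σ := by
    ext x
    simp only [intPolyhedron, ← hF₀, Set.mem_inter_iff, Set.mem_ofPred_eq, forall_mem_union,
      forall_mem_image, mem_univ, forall_const, signedOrthant]
    refine and_congr Iff.rfl (forall_congr' fun j => ?_)
    have : dot (intCast (-Pi.single j (s j))) x = -(σ j * x j) := by
      rw [← hs]
      simp [dot, Pi.single_apply]
    rw [this, neg_nonpos]
  obtain ⟨F, hF, hgcd⟩ := exists_primitive_intPolyhedron_eq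
    (by rw [hG]; exact ⟨h0, zero_mem_signedOrthant σ⟩)
  exact ⟨F, hF.trans hG, hgcd⟩

lemma HasFacetWidthOne.dot_le_one {Q : Set (Fin d → ℝ)} (hw : HasFacetWidthOne Q)
    (hQ : IsCompact Q) (h0 : 0 ∈ Q) (hσ : IsSignVec σ) (hQσ : Q ⊆ signedOrthant σ)
    {a : Fin d → ℤ} {b : ℝ} (hgcd : univ.gcd a = 1) (hF : IsFacetIneq Q a b)
    (ha : intCast a ∈ signedOrthant σ) : (∀ x ∈ Q, dot (intCast a) x ≤ 1) ∧ 1 ≤ b := by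
  set S := (fun x => dot (intCast a) x) '' Q
  have hinf : sInf S = 0 := IsLeast.csInf_eq ⟨⟨0, h0, by simp [dot]⟩,
    by rintro _ ⟨x, hx, rfl⟩; exact hσ.dot_nonneg ha (hQσ hx)⟩
  have hsup : sSup S = 1 := by linarith [hw a b hgcd hF]
  have hbdd : BddAbove S := (hQ.image (continuous_dot _)).bddAbove
  refine ⟨fun x hx => hsup ▸ le_csSup hbdd ⟨x, hx, rfl⟩, hsup ▸ csSup_le ⟨_, 0, h0, rfl⟩ ?_⟩
  rintro _ ⟨x, hx, rfl⟩
  exact hF.1 x hx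

lemma exists_finset_of_hasFacetWidthOne {F₀ : Finset ((Fin d → ℤ) × ℝ)}
    (hF₀ : intPolyhedron F₀ = P) (hPc : IsCompact P) (hlab : IsLocallyAntiBlocking P)
    (h0 : 0 ∈ interior P) (hσ : IsSignVec σ) (hw : HasFacetWidthOne (P ∩ signedOrthant σ)) :
    ∃ B : Finset (Fin d → ℤ),
      (∀ a ∈ B, intCast a ∈ signedOrthant σ ∧
        ∀ x ∈ P ∩ signedOrthant σ, dot (intCast a) x ≤ 1) ∧
      ∀ z ∈ signedOrthant σ, (∀ a ∈ B, dot (intCast a) z ≤ 1) → z ∈ P := by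
  classical
  obtain ⟨F, hF, hgcd⟩ := exists_primitive_intPolyhedron_eq_inter hF₀ (interior_subset h0) hσ
  obtain ⟨M, hMF, hMeq, hirr⟩ := exists_irredundant_subset F
  have hMQ : intPolyhedron M = P ∩ signedOrthant σ := hMeq.trans hF
  have hgcdM : ∀ p ∈ M, univ.gcd p.1 = 1 := fun p hp => hgcd p (hMF hp)
  obtain ⟨x₀, hx₀⟩ := nonempty_interior_inter_signedOrthant h0 hσ
  have hfacet : ∀ p ∈ M, IsFacetIneq (P ∩ signedOrthant σ) p.1 p.2 := fun p hp =>
    hMQ ▸ isFacetIneq_of_not_subset hp (fun q hq => intCast_ne_zero_of_gcd_eq_one (hgcdM q hq))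
      (hMQ ▸ hx₀) (hirr p hp)
  have h0Q : (0 : Fin d → ℝ) ∈ P ∩ signedOrthant σ :=
    ⟨interior_subset h0, zero_mem_signedOrthant σ⟩
  have hupper : ∀ p ∈ M, intCast p.1 ∈ signedOrthant σ →
      (∀ x ∈ P ∩ signedOrthant σ, dot (intCast p.1) x ≤ 1) ∧ 1 ≤ p.2 := fun p hp ha =>
    hw.dot_le_one (hPc.inter_right (isClosed_signedOrthant σ)) h0Q hσ Set.inter_subset_right
      (hgcdM p hp) (hfacet p hp) ha
  refine ⟨(M.filter fun p : (Fin d → ℤ) × ℝ => intCast p.1 ∈ signedOrthant σ).image Prod.fst,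
    ?_, fun z hz hB => ?_⟩
  · simp only [forall_mem_image, mem_filter, and_imp]
    exact fun p hp ha => ⟨ha, (hupper p hp ha).1⟩
  · simp only [forall_mem_image, mem_filter, and_imp] at hB
    suffices z ∈ intPolyhedron M from (hMQ ▸ this).1
    intro p hp
    by_cases ha : intCast p.1 ∈ signedOrthant σ
    · exact (hB hp ha).trans (hupper p hp ha).2
    · obtain ⟨j, hj⟩ := exists_mul_neg_of_notMem_signedOrthant ha
      have hb : 0 ≤ p.2 := by
        simpa [dot] using (hMQ ▸ h0Q : (0 : Fin d → ℝ) ∈ intPolyhedron M) p hp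
      rw [(hfacet p hp).dot_eq_neg_coord hlab hσ (hgcdM p hp) hj z]
      linarith [hz j]

theorem isReflexive_of_hasFacetWidthOne {V : Finset (Fin d → ℤ)}
    (hP : P = convexHull ℝ (intCast '' (V : Set (Fin d → ℤ)))) (hlab : IsLocallyAntiBlocking P)
    (h0 : 0 ∈ interior P) (hw : ∀ σ, IsSignVec σ → HasFacetWidthOne (P ∩ signedOrthant σ)) :
    IsReflexive P := by
  refine ⟨h0, ?_⟩
  obtain ⟨F₀, hF₀⟩ := exists_intPolyhedron_eq_convexHull V
  have hPc : IsCompact P := by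
    rw [hP]
    exact (V.finite_toSet.image intCast).isCompact_convexHull ℝ
  set S := (finite_setOf_isSignVec (d := d)).toFinset
  have hB : ∀ σ ∈ S, ∃ B : Finset (Fin d → ℤ), (∀ a ∈ B, intCast a ∈ signedOrthant σ ∧
      ∀ x ∈ P ∩ signedOrthant σ, dot (intCast a) x ≤ 1) ∧
      ∀ z ∈ signedOrthant σ, (∀ a ∈ B, dot (intCast a) z ≤ 1) → z ∈ P := fun σ hσ => by
    rw [Set.Finite.mem_toFinset] at hσ
    exact exists_finset_of_hasFacetWidthOne (hF₀.trans hP.symm) hPc hlab h0 hσ (hw σ hσ)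
  choose! B hBle hBmem using hB
  refine ⟨S.biUnion B, Set.ext fun x => ⟨fun hx a ha => ?_, fun hx => ?_⟩⟩
  · obtain ⟨σ, hσS, haB⟩ := mem_biUnion.mp ha
    have hσ : IsSignVec σ := (Set.Finite.mem_toFinset _).mp hσS
    exact (hσ.dot_le_dot_truncateToOrthant (hBle σ hσS a haB).1 x).trans
      ((hBle σ hσS a haB).2 _ (hlab.truncateToOrthant_mem hx σ))
  · have hσS : signVecOf x ∈ S := (Set.Finite.mem_toFinset _).mpr (isSignVec_signVecOf x)
    exact hBmem _ hσS x (mem_signedOrthant_signVecOf x) fun a ha =>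
      hx a (mem_biUnion.mpr ⟨_, hσS, ha⟩)

end Backward

/-- a locally anti-blocking lattice polytope with `0` in its
interior is reflexive iff all its orthant pieces are compressed (facet width
one). -/
theorem stmt6 {d : ℕ} (P : Set (Fin d → ℝ)) (hlat : IsLatticePolytope P)
    (h0 : 0 ∈ interior P)
    (hlab : ∀ σ : Fin d → ℝ, IsSignVec σ →
      IsAntiBlocking ((sflip σ '' P) ∩ nonnegOrthant d)) :
    IsReflexive P ↔
      ∀ σ : Fin d → ℝ, IsSignVec σ →
        HasFacetWidthOne (P ∩ {x | ∀ i, 0 ≤ σ i * x i}) := by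
  obtain ⟨V, hV, hP⟩ := hlat
  exact ⟨fun hrefl σ hσ => hasFacetWidthOne_of_isReflexive hP hV hlab hrefl hσ,
    isReflexive_of_hasFacetWidthOne hP hlab h0⟩
end

section
/- If G is a perfect graph on vertex set [d], then the anti-blocking dual of its stable set polytope is the stable set polytope of the complement graph: A(P_G) = P_{Ḡ}. -/
open Finset

/-- Indicator vector of a subset of `[d]`. -/
def indVec {d : ℕ} (s : Finset (Fin d)) : Fin d → ℝ := fun i => if i ∈ s then 1 else 0

/-- A stable (independent) set of a graph. -/
def IsStableSet {d : ℕ} (G : SimpleGraph (Fin d)) (s : Finset (Fin d)) : Prop :=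
  ∀ i ∈ s, ∀ j ∈ s, ¬ G.Adj i j

/-- The stable set polytope: convex hull of indicator vectors of stable sets. -/
def stableSetPolytope {d : ℕ} (G : SimpleGraph (Fin d)) : Set (Fin d → ℝ) :=
  convexHull ℝ {x | ∃ s : Finset (Fin d), IsStableSet G s ∧ x = indVec s}

/-- The clique number of a graph, as an extended natural number. -/
noncomputable def cliqueNumber {V : Type*} (G : SimpleGraph V) : ℕ∞ :=
  sSup {n : ℕ∞ | ∃ (m : ℕ) (t : Finset V), n = (m : ℕ∞) ∧ G.IsNClique m t}

/-- A graph is perfect if every induced subgraph has clique number equal to its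
chromatic number. -/
def IsPerfect {d : ℕ} (G : SimpleGraph (Fin d)) : Prop :=
  ∀ s : Set (Fin d), cliqueNumber (G.induce s) = (G.induce s).chromaticNumber

/-!
`P_{Ḡ} ⊆ A(P_G)` holds for every graph, because a clique and a stable set share at most one
vertex. For the converse, separate a point `y ∈ A(P_G) \ P_{Ḡ}` from `P_{Ḡ}` by a hyperplane with
normal `c`: for the positive part `c⁺` of `c`, `⟨y, c⁺⟩` exceeds the largest `c⁺`-weight `ω_{c⁺}` of a
clique. This is impossible in a perfect graph. For integral `w ≥ 0`, Lovász's weighted form of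
perfection gives a multiset of at most `ω_w` stable sets covering every vertex `v` at least `w v` times,
and summing `y` over them yields `⟨y, w⟩ ≤ ω_w`; real weights follow by scaling and rounding up.

The weighted colorings are built by induction on `w`, starting from `0/1` weights, where they are
colorings of induced subgraphs. Raising `w` by one at `v₀` either raises `ω_w`, and `{v₀}` becomes a
new class, or it does not; then a class `A ∋ v₀` of an optimal coloring meets every maximum clique
away from `v₀`, so lowering `w` on `A \ {v₀}` lowers `ω_w` and one recurses.
-/

namespace SimpleGraph

variable {V : Type*} [Fintype V] (G : SimpleGraph V)

section MaxCliqueWeight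

variable {R : Type*} [AddCommMonoid R] [LinearOrder R]

open scoped Classical in
theorem nonempty_filter_isClique :
    (univ.filter fun C : Finset V => G.IsClique (C : Set V)).Nonempty :=
  ⟨∅, by simp⟩

open scoped Classical in
/-- The weighted clique number `ω_w(G)`. -/
noncomputable def maxCliqueWeight (w : V → R) : R :=
  (univ.filter fun C : Finset V => G.IsClique (C : Set V)).sup' G.nonempty_filter_isClique
    fun C => ∑ v ∈ C, w v

variable {G}

theorem sum_le_maxCliqueWeight (w : V → R) {C : Finset V} (hC : G.IsClique (C : Set V)) :
    ∑ v ∈ C, w v ≤ G.maxCliqueWeight w := by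
  classical
  exact le_sup' (fun C : Finset V => ∑ v ∈ C, w v) (by simpa using hC)

theorem exists_isClique_sum_eq_maxCliqueWeight (w : V → R) :
    ∃ C : Finset V, G.IsClique (C : Set V) ∧ ∑ v ∈ C, w v = G.maxCliqueWeight w := by
  classical
  obtain ⟨C, hC, hsum⟩ := exists_mem_eq_sup' G.nonempty_filter_isClique fun C => ∑ v ∈ C, w v
  exact ⟨C, by simpa using hC, by rw [maxCliqueWeight, hsum]⟩

theorem maxCliqueWeight_le_iff {w : V → R} {a : R} :
    G.maxCliqueWeight w ≤ a ↔ ∀ C : Finset V, G.IsClique (C : Set V) → ∑ v ∈ C, w v ≤ a := by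
  classical
  rw [maxCliqueWeight, Finset.sup'_le_iff]
  simp

theorem maxCliqueWeight_lt_iff {w : V → R} {a : R} :
    G.maxCliqueWeight w < a ↔ ∀ C : Finset V, G.IsClique (C : Set V) → ∑ v ∈ C, w v < a := by
  classical
  rw [maxCliqueWeight, Finset.sup'_lt_iff]
  simp

theorem maxCliqueWeight_mono [IsOrderedAddMonoid R] {w w' : V → R} (h : w ≤ w') :
    G.maxCliqueWeight w ≤ G.maxCliqueWeight w' :=
  maxCliqueWeight_le_iff.2 fun _ hC =>
    (sum_le_sum fun v _ => h v).trans (sum_le_maxCliqueWeight w' hC)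

end MaxCliqueWeight

variable {G}

theorem cliqueNumber_induce_le_maxCliqueWeight {s : Set V} {w : V → ℕ} (hw : ∀ v ∈ s, 1 ≤ w v) :
    cliqueNumber (G.induce s) ≤ G.maxCliqueWeight w := by
  refine sSup_le ?_
  rintro _ ⟨m, t, rfl, ht⟩
  rw [isNClique_induce_iff] at ht
  have hm : m ≤ ∑ v ∈ t.map (.subtype _), w v := by
    rw [← ht.card_eq, card_eq_sum_ones]
    refine sum_le_sum fun v hv => ?_
    obtain ⟨a, -, rfl⟩ := mem_map.1 hv
    exact hw a a.2
  exact_mod_cast hm.trans (sum_le_maxCliqueWeight w ht.isClique)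

end SimpleGraph

theorem sum_countP_mem_mul_le_card {ι R : Type*} [DecidableEq ι] [CommSemiring R] [PartialOrder R]
    [IsOrderedRing R] (s : Finset ι) (y : ι → R) (S : Multiset (Finset ι))
    (hS : ∀ A ∈ S, ∑ i ∈ s ∩ A, y i ≤ 1) :
    ∑ i ∈ s, (S.countP (i ∈ ·) : R) * y i ≤ Multiset.card S := by
  induction S using Multiset.induction_on with
  | empty => simp
  | cons A S ih =>
    have hA := hS A (Multiset.mem_cons_self A S)
    have hrest := ih fun B hB => hS B (Multiset.mem_cons_of_mem hB)
    simp only [Multiset.countP_cons, Nat.cast_add, Nat.cast_ite, Nat.cast_one, Nat.cast_zero,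
      add_mul, ite_mul, one_mul, zero_mul, sum_add_distrib, sum_ite_mem, Multiset.card_cons]
    exact add_le_add hrest hA

namespace SimpleGraph

variable {V : Type*} [DecidableEq V] {G : SimpleGraph V}

theorem IsClique.card_inter_le_one {C A : Finset V} (hC : G.IsClique (C : Set V))
    (hA : G.IsIndepSet (A : Set V)) : #(C ∩ A) ≤ 1 := by
  refine card_le_one.2 fun a ha b hb => ?_
  rw [mem_inter] at ha hb
  by_contra hab
  exact hA ha.2 hb.2 hab (hC ha.1 hb.1 hab)

variable (G) in
/-- Keeping classes inside the support of `w` is what makes lowering `w` on a class lower the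
weight of every clique the class meets. -/
def IsWeightedColoring (w : V → ℕ) (S : Multiset (Finset V)) : Prop :=
  (∀ A ∈ S, G.IsIndepSet (A : Set V) ∧ ∀ v ∈ A, 0 < w v) ∧ ∀ v, w v ≤ S.countP (v ∈ ·)

theorem IsWeightedColoring.cons_singleton {w : V → ℕ} {S : Multiset (Finset V)}
    (hS : G.IsWeightedColoring w S) (v₀ : V) :
    G.IsWeightedColoring (w + Pi.single v₀ 1) ({v₀} ::ₘ S) := by
  refine ⟨fun A hA => ?_, fun v => ?_⟩
  · rcases Multiset.mem_cons.1 hA with rfl | hA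
    · simp
    · exact ⟨(hS.1 A hA).1, fun v hv => ((hS.1 A hA).2 v hv).trans_le (by simp)⟩
  · have := hS.2 v
    rw [Multiset.countP_cons]
    by_cases hv : v = v₀
    · subst hv; simp [this]
    · simp [hv, this]

variable [Fintype V]

/-- Double counting: `C` receives `ω_w ≥ |S|` incidences from `S`, at most one per class. -/
theorem IsWeightedColoring.inter_nonempty {w : V → ℕ} {S : Multiset (Finset V)}
    (hS : G.IsWeightedColoring w S) (hcard : Multiset.card S ≤ G.maxCliqueWeight w)
    {C : Finset V} (hC : G.IsClique (C : Set V)) (hCw : ∑ v ∈ C, w v = G.maxCliqueWeight w)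
    {A : Finset V} (hA : A ∈ S) : (C ∩ A).Nonempty := by
  by_contra hCA
  obtain ⟨S', rfl⟩ := Multiset.exists_cons_of_mem hA
  have hcount : ∀ v ∈ C, (A ::ₘ S').countP (v ∈ ·) = S'.countP (v ∈ ·) := fun v hv =>
    Multiset.countP_cons_of_neg _ fun hvA => hCA ⟨v, mem_inter.2 ⟨hv, hvA⟩⟩
  have hS' : ∑ v ∈ C, S'.countP (v ∈ ·) ≤ Multiset.card S' := by
    simpa using sum_countP_mem_mul_le_card (R := ℕ) C (fun _ => 1) S' fun B hB =>
      by simpa using hC.card_inter_le_one (hS.1 B (Multiset.mem_cons_of_mem hB)).1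
  have hw : ∑ v ∈ C, w v ≤ ∑ v ∈ C, (A ::ₘ S').countP (v ∈ ·) := sum_le_sum fun v _ => hS.2 v
  rw [sum_congr rfl hcount] at hw
  rw [Multiset.card_cons] at hcard
  omega

theorem maxCliqueWeight_add_single_le (w : V → ℕ) (v₀ : V) :
    G.maxCliqueWeight (w + Pi.single v₀ 1) ≤ G.maxCliqueWeight w + 1 := by
  refine maxCliqueWeight_le_iff.2 fun C hC => ?_
  simp only [Pi.add_apply]
  rw [sum_add_distrib, sum_pi_single']
  exact add_le_add (sum_le_maxCliqueWeight w hC) (by split_ifs <;> simp)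

theorem IsWeightedColoring.maxCliqueWeight_lt {w : V → ℕ} {S : Multiset (Finset V)}
    (hS : G.IsWeightedColoring w S) (hcard : Multiset.card S ≤ G.maxCliqueWeight w)
    {A : Finset V} (hA : A ∈ S) {v₀ : V}
    (hv₀ : ∀ C : Finset V, G.IsClique (C : Set V) → ∑ v ∈ C, w v = G.maxCliqueWeight w → v₀ ∉ C) :
    G.maxCliqueWeight (fun v => if v ∈ A.erase v₀ then w v - 1 else w v) <
      G.maxCliqueWeight w := by
  refine maxCliqueWeight_lt_iff.2 fun C hC => ?_
  have hle : ∀ v ∈ C, (if v ∈ A.erase v₀ then w v - 1 else w v) ≤ w v := fun v _ => by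
    split_ifs <;> omega
  rcases (sum_le_maxCliqueWeight w hC).lt_or_eq with hlt | heq
  · exact (sum_le_sum hle).trans_lt hlt
  obtain ⟨u, hu⟩ := hS.inter_nonempty hcard hC heq hA
  rw [mem_inter] at hu
  have huv₀ : u ≠ v₀ := fun h => hv₀ C hC heq (h ▸ hu.1)
  have hwu : 0 < w u := (hS.1 A hA).2 u hu.2
  refine heq ▸ sum_lt_sum hle ⟨u, hu.1, ?_⟩
  rw [if_pos (mem_erase.2 ⟨huv₀, hu.2⟩)]
  omega

theorem exists_weightedColoring_add_single {w : V → ℕ} {v₀ : V} (hv₀ : 0 < w v₀)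
    (ih : ∀ w' ≤ w, ∃ S, G.IsWeightedColoring w' S ∧
      Multiset.card S ≤ G.maxCliqueWeight w') :
    ∃ S, G.IsWeightedColoring (w + Pi.single v₀ 1) S ∧
      Multiset.card S ≤ G.maxCliqueWeight (w + Pi.single v₀ 1) := by
  obtain ⟨S, hS, hcard⟩ := ih w le_rfl
  rcases (maxCliqueWeight_add_single_le w v₀).lt_or_eq.symm with heq | hlt
  · exact ⟨{v₀} ::ₘ S, hS.cons_singleton v₀, by rw [Multiset.card_cons, heq]; omega⟩
  have hv₀C : ∀ C : Finset V, G.IsClique (C : Set V) →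
      ∑ v ∈ C, w v = G.maxCliqueWeight w → v₀ ∉ C := by
    intro C hC hCw hv₀C
    have := sum_le_maxCliqueWeight (w + Pi.single v₀ 1) hC
    simp only [Pi.add_apply] at this
    rw [sum_add_distrib, sum_pi_single', if_pos hv₀C, hCw] at this
    omega
  obtain ⟨A, hA, hv₀A⟩ : ∃ A ∈ S, v₀ ∈ A := Multiset.countP_pos.1 (hv₀.trans_le (hS.2 v₀))
  set w₂ : V → ℕ := fun v => if v ∈ A.erase v₀ then w v - 1 else w v with hw₂_def
  have hw₂ : w₂ ≤ w := fun v => by simp only [hw₂_def]; split_ifs <;> omega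
  obtain ⟨T, hT, hTcard⟩ := ih w₂ hw₂
  have hmono : G.maxCliqueWeight w ≤ G.maxCliqueWeight (w + Pi.single v₀ 1) :=
    maxCliqueWeight_mono le_self_add
  refine ⟨A ::ₘ T, ⟨fun B hB => ?_, fun v => ?_⟩, ?_⟩
  · rcases Multiset.mem_cons.1 hB with rfl | hB
    · exact ⟨(hS.1 B hA).1, fun v hv => ((hS.1 B hA).2 v hv).trans_le (by simp)⟩
    · exact ⟨(hT.1 B hB).1, fun v hv => ((hT.1 B hB).2 v hv).trans_le ((hw₂ v).trans (by simp))⟩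
  · have := hT.2 v
    rw [Multiset.countP_cons]
    by_cases hv : v = v₀
    · subst hv
      simp_all
    · simp only [hw₂_def, mem_erase, ne_eq, hv, not_false_eq_true, true_and] at this
      simp only [Pi.add_apply, Pi.single_apply, hv, if_false]
      split_ifs at this ⊢ <;> omega
  · have hlt₂ : G.maxCliqueWeight w₂ < G.maxCliqueWeight w := hS.maxCliqueWeight_lt hcard hA hv₀C
    rw [Multiset.card_cons]
    omega

theorem exists_weightedColoring_of_forall_le_one
    (hbase : ∀ w : V → ℕ, (∀ v, w v ≤ 1) →
      ∃ S, G.IsWeightedColoring w S ∧ Multiset.card S ≤ G.maxCliqueWeight w)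
    (w : V → ℕ) : ∃ S, G.IsWeightedColoring w S ∧ Multiset.card S ≤ G.maxCliqueWeight w := by
  induction w using WellFoundedLT.induction with
  | ind w ih =>
  by_cases hw : ∀ v, w v ≤ 1
  · exact hbase w hw
  obtain ⟨v₀, hv₀⟩ : ∃ v, 1 < w v := by simpa using hw
  have hsplit : w = (w - Pi.single v₀ 1) + Pi.single v₀ 1 := by
    ext v
    by_cases hv : v = v₀
    · subst hv; simp; omega
    · simp [hv]
  have hlt : w - Pi.single v₀ 1 < w := by
    refine lt_of_le_of_ne tsub_le_self fun h => ?_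
    have := congr_fun h v₀
    simp at this
    omega
  rw [hsplit]
  exact exists_weightedColoring_add_single (by simp; omega)
    fun w' hw' => ih w' (hw'.trans_lt hlt)

theorem exists_weightedColoring_of_colorable_induce {w : V → ℕ} (hw : ∀ v, w v ≤ 1) {n : ℕ}
    (h : (G.induce {v | 0 < w v}).Colorable n) :
    ∃ S, G.IsWeightedColoring w S ∧ Multiset.card S ≤ n := by
  classical
  obtain ⟨c⟩ := h
  let colorClass : Fin n → Finset V := fun k => univ.filter fun v => ∃ hv : 0 < w v, c ⟨v, hv⟩ = k
  refine ⟨univ.val.map colorClass, ⟨fun A hA => ?_, fun v => ?_⟩, by simp⟩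
  · obtain ⟨k, -, rfl⟩ := Multiset.mem_map.1 hA
    refine ⟨fun u hu v hv _ hadj => ?_, fun v hv => (mem_filter.1 hv).2.1⟩
    obtain ⟨hu, rfl⟩ := (mem_filter.1 hu).2
    obtain ⟨hv, hcv⟩ := (mem_filter.1 hv).2
    exact c.valid (by simpa using hadj) hcv.symm
  · rcases Nat.eq_zero_or_pos (w v) with h0 | hv
    · simp [h0]
    · refine (hw v).trans (Nat.one_le_iff_ne_zero.2 (Multiset.countP_pos.2
        ⟨colorClass (c ⟨v, hv⟩), Multiset.mem_map_of_mem _ (mem_univ_val _), ?_⟩).ne')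
      exact mem_filter.2 ⟨mem_univ v, hv, rfl⟩

end SimpleGraph

theorem IsPerfect.exists_weightedColoring {d : ℕ} {G : SimpleGraph (Fin d)} (hG : IsPerfect G)
    (w : Fin d → ℕ) :
    ∃ S, G.IsWeightedColoring w S ∧ Multiset.card S ≤ G.maxCliqueWeight w := by
  refine G.exists_weightedColoring_of_forall_le_one (fun w hw => ?_) w
  refine SimpleGraph.exists_weightedColoring_of_colorable_induce hw ?_
  rw [← SimpleGraph.chromaticNumber_le_iff_colorable, ← hG]
  exact SimpleGraph.cliqueNumber_induce_le_maxCliqueWeight fun _ hv => hv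

section StableSetPolytope

variable {d : ℕ}

theorem isLinearMap_dot_left (x : Fin d → ℝ) : IsLinearMap ℝ fun y => dot y x :=
  ⟨fun a b => add_dotProduct a b x, fun c a => smul_dotProduct c a x⟩

theorem isLinearMap_dot_right (x : Fin d → ℝ) : IsLinearMap ℝ (dot x) :=
  ⟨dotProduct_add x, fun c y => dotProduct_smul c x y⟩

theorem dot_comm (x y : Fin d → ℝ) : dot x y = dot y x :=
  dotProduct_comm x y

theorem dot_indVec (y : Fin d → ℝ) (s : Finset (Fin d)) : dot y (indVec s) = ∑ i ∈ s, y i := by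
  simp only [dot, indVec, mul_ite, mul_one, mul_zero, sum_ite_mem, univ_inter]

theorem dot_indVec_indVec (s t : Finset (Fin d)) : dot (indVec s) (indVec t) = #(s ∩ t) := by
  rw [dot_indVec, inter_comm, ← filter_mem_eq_inter, card_filter]
  simp [indVec]

theorem isStableSet_iff_isIndepSet {G : SimpleGraph (Fin d)} {s : Finset (Fin d)} :
    IsStableSet G s ↔ G.IsIndepSet (s : Set (Fin d)) := by
  refine ⟨fun h i hi j hj _ => h i hi j hj, fun h i hi j hj hij => ?_⟩
  obtain rfl | hne := eq_or_ne i j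
  · exact hij.ne rfl
  · exact h hi hj hne hij

theorem isStableSet_compl_iff {G : SimpleGraph (Fin d)} {s : Finset (Fin d)} :
    IsStableSet Gᶜ s ↔ G.IsClique (s : Set (Fin d)) := by
  rw [isStableSet_iff_isIndepSet, SimpleGraph.isIndepSet_compl]

theorem convex_ABdual (Q : Set (Fin d → ℝ)) : Convex ℝ (ABdual Q) := by
  have hQ : ABdual Q = Set.Ici 0 ∩ ⋂ x ∈ Q, {y | dot y x ≤ 1} := by
    ext y
    simp [ABdual, nonnegOrthant, Pi.le_def]
  rw [hQ]
  exact (convex_Ici 0).inter <| convex_iInter₂ fun x _ =>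
    convex_halfSpace_le (isLinearMap_dot_left x) 1

theorem isClosed_stableSetPolytope (G : SimpleGraph (Fin d)) :
    IsClosed (stableSetPolytope G) :=
  Set.Finite.isClosed_convexHull ℝ <| (Set.finite_range indVec).subset <| by
    rintro _ ⟨s, -, rfl⟩
    exact ⟨s, rfl⟩

theorem stableSetPolytope_compl_subset_ABdual (G : SimpleGraph (Fin d)) :
    stableSetPolytope Gᶜ ⊆ ABdual (stableSetPolytope G) := by
  refine convexHull_min ?_ (convex_ABdual _)
  rintro _ ⟨T, hT, rfl⟩
  refine ⟨fun i => by unfold indVec; split_ifs <;> norm_num, fun x hx => ?_⟩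
  refine convexHull_min ?_ (convex_halfSpace_le (isLinearMap_dot_right (indVec T)) 1) hx
  rintro _ ⟨S, hS, rfl⟩
  rw [Set.mem_ofPred_eq, dot_indVec_indVec]
  exact_mod_cast (isStableSet_compl_iff.1 hT).card_inter_le_one (isStableSet_iff_isIndepSet.1 hS)

end StableSetPolytope

section Perfect

variable {d : ℕ} {G : SimpleGraph (Fin d)} {y : Fin d → ℝ}

theorem IsPerfect.dot_natCast_le_maxCliqueWeight (hG : IsPerfect G)
    (hy : y ∈ ABdual (stableSetPolytope G)) (w : Fin d → ℕ) :
    dot y (fun i => (w i : ℝ)) ≤ G.maxCliqueWeight w := by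
  obtain ⟨S, hS, hcard⟩ := hG.exists_weightedColoring w
  have hcolor : ∀ A ∈ S, ∑ i ∈ univ ∩ A, y i ≤ 1 := fun A hA => by
    rw [univ_inter, ← dot_indVec]
    exact hy.2 _ (subset_convexHull ℝ _ ⟨A, isStableSet_iff_isIndepSet.2 (hS.1 A hA).1, rfl⟩)
  calc dot y (fun i => (w i : ℝ)) ≤ ∑ i, (S.countP (i ∈ ·) : ℝ) * y i := by
        refine sum_le_sum fun i _ => ?_
        rw [mul_comm]
        exact mul_le_mul_of_nonneg_right (Nat.cast_le.2 (hS.2 i)) (hy.1 i)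
    _ ≤ Multiset.card S := sum_countP_mem_mul_le_card univ y S hcolor
    _ ≤ G.maxCliqueWeight w := by exact_mod_cast hcard

theorem IsPerfect.dot_le_maxCliqueWeight (hG : IsPerfect G)
    (hy : y ∈ ABdual (stableSetPolytope G)) {c : Fin d → ℝ} (hc : 0 ≤ c) :
    dot y c ≤ G.maxCliqueWeight c := by
  -- `⌈N c⌉` exceeds `N c` by less than `1` per vertex, so scaling by `N` loses at most `d`.
  have happrox : ∀ N : ℕ, N * dot y c ≤ N * G.maxCliqueWeight c + d := by
    intro N
    obtain ⟨C, hC, hCw⟩ := SimpleGraph.exists_isClique_sum_eq_maxCliqueWeight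
      (G := G) fun i => ⌈N * c i⌉₊
    calc (N : ℝ) * dot y c = dot y (N • c) := by
          simp only [dot, mul_sum, Pi.smul_apply, nsmul_eq_mul]; ring_nf
      _ ≤ dot y (fun i => (⌈N * c i⌉₊ : ℝ)) :=
          dotProduct_le_dotProduct_of_nonneg_left (fun i => by simpa using Nat.le_ceil _) hy.1
      _ ≤ ∑ i ∈ C, (⌈N * c i⌉₊ : ℝ) := by
          rw [← Nat.cast_sum, hCw]; exact hG.dot_natCast_le_maxCliqueWeight hy _
      _ ≤ ∑ i ∈ C, (N * c i + 1) :=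
          sum_le_sum fun i _ => (Nat.ceil_lt_add_one (mul_nonneg N.cast_nonneg (hc i))).le
      _ = N * ∑ i ∈ C, c i + #C := by rw [sum_add_distrib, mul_sum]; simp
      _ ≤ N * G.maxCliqueWeight c + d := by
          gcongr
          · exact SimpleGraph.sum_le_maxCliqueWeight c hC
          · exact_mod_cast card_le_univ C |>.trans_eq (Fintype.card_fin d)
  by_contra! h
  obtain ⟨N, hN⟩ := exists_nat_gt (d / (dot y c - G.maxCliqueWeight c))
  rw [div_lt_iff₀ (sub_pos.2 h)] at hN
  nlinarith [happrox N]

theorem ABdual_stableSetPolytope_subset (hG : IsPerfect G) :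
    ABdual (stableSetPolytope G) ⊆ stableSetPolytope Gᶜ := by
  intro y hy
  by_contra hyG
  obtain ⟨f, u, hf, hfy⟩ := geometric_hahn_banach_closed_point (convex_convexHull ℝ _)
    (isClosed_stableSetPolytope Gᶜ) hyG
  set a : Fin d → ℝ := fun i => f fun j => if i = j then 1 else 0
  have hfa : ∀ x, f x = dot x a := fun x => by
    simpa [dot, smul_eq_mul] using (f : (Fin d → ℝ) →ₗ[ℝ] ℝ).pi_apply_eq_sum_univ x
  have hlower : u < dot y (fun i => max (a i) 0) := by
    calc u < dot y a := (hfy.trans_eq (hfa y))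
      _ ≤ _ := dotProduct_le_dotProduct_of_nonneg_left (fun i => le_max_left _ _) hy.1
  have hupper : G.maxCliqueWeight (fun i => max (a i) 0) < u := by
    refine SimpleGraph.maxCliqueWeight_lt_iff.2 fun C hC => ?_
    have hpos : G.IsClique ((C.filter fun i => 0 < a i : Finset (Fin d)) : Set (Fin d)) :=
      hC.subset (coe_subset.2 (filter_subset _ _))
    calc ∑ i ∈ C, max (a i) 0 = ∑ i ∈ C.filter fun i => 0 < a i, a i := by
          rw [sum_filter]
          refine sum_congr rfl fun i _ => ?_
          split_ifs with hi
          · exact max_eq_left hi.le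
          · exact max_eq_right (not_lt.1 hi)
      _ = f (indVec (C.filter fun i => 0 < a i)) := by rw [hfa, dot_comm, dot_indVec]
      _ < u := hf _ (subset_convexHull ℝ _ ⟨_, isStableSet_compl_iff.2 hpos, rfl⟩)
  exact (hlower.trans_le (hG.dot_le_maxCliqueWeight hy fun i => le_max_right _ _)).not_gt hupper

end Perfect

/-- for a perfect graph `G`, the anti-blocking dual of the stable
set polytope of `G` is the stable set polytope of the complement graph. -/
theorem stmt9 {d : ℕ} (G : SimpleGraph (Fin d)) (hG : IsPerfect G) :
    ABdual (stableSetPolytope G) = stableSetPolytope Gᶜ :=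
  (ABdual_stableSetPolytope_subset hG).antisymm (stableSetPolytope_compl_subset_ABdual G)
end
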